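/- arXiv:1103.0491 — 9 statements merged into one kernel-verified Lean document; each statement's English description precedes it below -/
import Mathlib

section
/- For every u₁ > 0 and every k with 2 ≤ k ≤ n, the identity (U_k − U_{k−1})(u₁) = h²·((1/2)·g₁(u₁) + Σ_{j=2}^{k−1} g₁(U_j(u₁))) holds, and in particular (U_k − U_{k−1})(u₁) > 0. -/
/-!
The recursion says `U (k+1) - U k = (U k - U (k-1)) + h² g₁(U k)`, which telescopes down to
`U 2 - U 1 = h² g₁(u₁) / 2`. Since `g₁(0) = 0` and `g₁' > 0`, `g₁` is positive on `(0, ∞)`, so by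
strong induction every `U j` stays `≥ u₁ > 0` and each summand is positive.
-/

open Finset

noncomputable def U (g1 : ℝ → ℝ) (h : ℝ) : ℕ → ℝ → ℝ
  | 0, u => u
  | 1, u => u
  | 2, u => u + h ^ 2 / 2 * g1 u
  | k + 3, u => 2 * U g1 h (k + 2) u - U g1 h (k + 1) u + h ^ 2 * g1 (U g1 h (k + 2) u)

section U

variable {g1 : ℝ → ℝ} {h u : ℝ}

theorem U_add_three_sub (k : ℕ) :
    U g1 h (k + 3) u - U g1 h (k + 2) u =
      U g1 h (k + 2) u - U g1 h (k + 1) u + h ^ 2 * g1 (U g1 h (k + 2) u) := by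
  rw [U]; ring

theorem U_sub_U_pred {k : ℕ} (hk : 2 ≤ k) :
    U g1 h k u - U g1 h (k - 1) u =
      h ^ 2 * (1 / 2 * g1 u + ∑ j ∈ Icc 2 (k - 1), g1 (U g1 h j u)) := by
  induction k, hk using Nat.le_induction with
  | base => simp only [U, Nat.add_one_sub_one, Icc_eq_empty_of_lt one_lt_two, sum_empty]; ring
  | succ k hk ih =>
    obtain ⟨m, rfl⟩ : ∃ m, k = m + 2 := ⟨k - 2, by omega⟩
    rw [show m + 2 + 1 - 1 = m + 2 from rfl, sum_Icc_succ_top (by omega), U_add_three_sub]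
    rw [show m + 2 - 1 = m + 1 from rfl] at ih
    linear_combination ih

theorem le_U (hg : ∀ x ≥ u, 0 ≤ g1 x) (k : ℕ) : u ≤ U g1 h k u := by
  induction k using Nat.strong_induction_on with
  | _ k ih =>
    rcases lt_or_ge k 2 with hk | hk
    · interval_cases k <;> exact le_rfl
    · have hsum : 0 ≤ ∑ j ∈ Icc 2 (k - 1), g1 (U g1 h j u) :=
        sum_nonneg fun j hj => hg _ (ih j (by have := (mem_Icc.1 hj).2; omega))
      nlinarith [U_sub_U_pred (g1 := g1) (h := h) (u := u) hk, ih (k - 1) (by omega),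
        hg u le_rfl, sq_nonneg h]

theorem U_sub_U_pred_pos (hh : h ≠ 0) (hgu : 0 < g1 u) (hg : ∀ x ≥ u, 0 ≤ g1 x)
    {k : ℕ} (hk : 2 ≤ k) : 0 < U g1 h k u - U g1 h (k - 1) u := by
  rw [U_sub_U_pred hk]
  have hsum : 0 ≤ ∑ j ∈ Icc 2 (k - 1), g1 (U g1 h j u) :=
    sum_nonneg fun j _ => hg _ (le_U hg j)
  positivity

end U

theorem pos_of_map_zero_of_deriv_pos {f : ℝ → ℝ} (hf : ContinuousOn f (Set.Ici 0))
    (hf0 : f 0 = 0) (hf' : ∀ x > 0, 0 < deriv f x) {x : ℝ} (hx : 0 < x) : 0 < f x := by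
  have hmono : StrictMonoOn f (Set.Ici 0) :=
    strictMonoOn_of_deriv_pos (convex_Ici 0) hf fun y hy => hf' y (by simpa using hy)
  simpa [hf0] using hmono Set.self_mem_Ici hx.le hx

theorem stmt0_general
    (g1 : ℝ → ℝ)
    (hg1C : ContDiff ℝ 3 g1)
    (hg10 : g1 0 = 0)
    (hg1d1 : ∀ x > 0, 0 < deriv g1 x)
    (n : ℕ) (hn : 2 ≤ n) (h : ℝ) (hh : h = 1 / ((n : ℝ) - 1))
    (u1 : ℝ) (hu1 : 0 < u1) (k : ℕ) (hk2 : 2 ≤ k) :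
    U g1 h k u1 - U g1 h (k - 1) u1 =
      h ^ 2 * (1 / 2 * g1 u1 + ∑ j ∈ Finset.Icc 2 (k - 1), g1 (U g1 h j u1)) ∧
    0 < U g1 h k u1 - U g1 h (k - 1) u1 := by
  have hg1pos : ∀ x > 0, 0 < g1 x :=
    fun x hx => pos_of_map_zero_of_deriv_pos hg1C.continuous.continuousOn hg10 hg1d1 hx
  have hh0 : h ≠ 0 := by
    have : (2 : ℝ) ≤ n := by exact_mod_cast hn
    rw [hh]; exact one_div_ne_zero (by linarith)
  refine ⟨U_sub_U_pred hk2, U_sub_U_pred_pos hh0 (hg1pos u1 hu1) ?_ hk2⟩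
  exact fun x hx => (hg1pos x (hu1.trans_le hx)).le

theorem stmt0
    (g1 g2 : ℝ → ℝ)
    (hg1C : ContDiff ℝ 3 g1) (hg2C : ContDiff ℝ 3 g2)
    (hg1A : AnalyticAt ℝ g1 0) (hg2A : AnalyticAt ℝ g2 0)
    (hg10 : g1 0 = 0) (hg20 : g2 0 = 0)
    (hg1d1 : ∀ x > 0, 0 < deriv g1 x) (hg2d1 : ∀ x > 0, 0 < deriv g2 x)
    (hg1d2 : ∀ x > 0, 0 < iteratedDeriv 2 g1 x) (hg2d2 : ∀ x > 0, 0 < iteratedDeriv 2 g2 x)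
    (hg1d3 : ∀ x > 0, 0 ≤ iteratedDeriv 3 g1 x) (hg2d3 : ∀ x > 0, 0 ≤ iteratedDeriv 3 g2 x)
    (n : ℕ) (hn : 2 ≤ n) (h : ℝ) (hh : h = 1 / ((n : ℝ) - 1))
    (u1 : ℝ) (hu1 : 0 < u1) (k : ℕ) (hk2 : 2 ≤ k) (hkn : k ≤ n) :
    U g1 h k u1 - U g1 h (k - 1) u1 =
      h ^ 2 * (1 / 2 * g1 u1 + ∑ j ∈ Finset.Icc 2 (k - 1), g1 (U g1 h j u1)) ∧
    0 < U g1 h k u1 - U g1 h (k - 1) u1 :=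
  stmt0_general g1 hg1C hg10 hg1d1 n hn h hh u1 hu1 k hk2
end

section
/- For every u₁ > 0 and every k with 2 ≤ k ≤ n, the identity U_k(u₁) = u₁ + h²·(((k−1)/2)·g₁(u₁) + Σ_{j=2}^{k−1} (k − j)·g₁(U_j(u₁))) holds, and in particular U_k(u₁) > 0. -/
open Finset

theorem stmt1
    (g1 g2 : ℝ → ℝ)
    (hg1C : ContDiff ℝ 3 g1) (hg2C : ContDiff ℝ 3 g2)
    (hg1A : AnalyticAt ℝ g1 0) (hg2A : AnalyticAt ℝ g2 0)
    (hg10 : g1 0 = 0) (hg20 : g2 0 = 0)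
    (hg1d1 : ∀ x > 0, 0 < deriv g1 x) (hg2d1 : ∀ x > 0, 0 < deriv g2 x)
    (hg1d2 : ∀ x > 0, 0 < iteratedDeriv 2 g1 x) (hg2d2 : ∀ x > 0, 0 < iteratedDeriv 2 g2 x)
    (hg1d3 : ∀ x > 0, 0 ≤ iteratedDeriv 3 g1 x) (hg2d3 : ∀ x > 0, 0 ≤ iteratedDeriv 3 g2 x)
    (n : ℕ) (hn : 2 ≤ n) (h : ℝ) (hh : h = 1 / ((n : ℝ) - 1))
    (u1 : ℝ) (hu1 : 0 < u1) (k : ℕ) (hk2 : 2 ≤ k) (hkn : k ≤ n) :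
    U g1 h k u1 =
      u1 + h ^ 2 * (((k : ℝ) - 1) / 2 * g1 u1 +
        ∑ j ∈ Finset.Icc 2 (k - 1), ((k : ℝ) - (j : ℝ)) * g1 (U g1 h j u1)) ∧
    0 < U g1 h k u1 := by
  have hg1pos : ∀ x > 0, 0 < g1 x := by
    intro x hx
    have hmono : StrictMonoOn g1 (Set.Ici 0) := by
      apply strictMonoOn_of_deriv_pos (convex_Ici 0) hg1C.continuous.continuousOn
      intro y hy
      rw [interior_Ici] at hy
      exact hg1d1 y hy
    have := hmono Set.self_mem_Ici (le_of_lt hx) hx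
    rwa [hg10] at this
  have key : ∀ k, 2 ≤ k →
      (U g1 h k u1 =
        u1 + h ^ 2 * (((k : ℝ) - 1) / 2 * g1 u1 +
          ∑ j ∈ Finset.Icc 2 (k - 1), ((k : ℝ) - (j : ℝ)) * g1 (U g1 h j u1)) ∧
      0 < U g1 h k u1) := by
    intro k
    induction k using Nat.strong_induction_on with
    | _ k ih =>
      intro hk2
      -- a helper for positivity from the formula
      have hposform : ∀ k', 2 ≤ k' → (∀ j ∈ Finset.Icc 2 (k'-1), 0 < U g1 h j u1) →
          U g1 h k' u1 =
            u1 + h ^ 2 * (((k' : ℝ) - 1) / 2 * g1 u1 +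
              ∑ j ∈ Finset.Icc 2 (k' - 1), ((k' : ℝ) - (j : ℝ)) * g1 (U g1 h j u1)) →
          0 < U g1 h k' u1 := by
        intro k' hk' hjpos heq
        rw [heq]
        have hk2r : (2:ℝ) ≤ (k':ℝ) := by exact_mod_cast hk'
        have hg : 0 ≤ g1 u1 := (hg1pos u1 hu1).le
        have h1 : 0 ≤ ((k' : ℝ) - 1) / 2 * g1 u1 := mul_nonneg (by linarith) hg
        have h2 : 0 ≤ ∑ j ∈ Finset.Icc 2 (k' - 1), ((k' : ℝ) - (j : ℝ)) * g1 (U g1 h j u1) := by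
          apply Finset.sum_nonneg
          intro j hj
          rw [Finset.mem_Icc] at hj
          have hjk : (j:ℝ) ≤ (k':ℝ) := by
            have : j ≤ k' := le_trans hj.2 (Nat.sub_le _ _)
            exact_mod_cast this
          exact mul_nonneg (by linarith) (hg1pos _ (hjpos j (Finset.mem_Icc.mpr hj))).le
        nlinarith [sq_nonneg h]
      rcases k with _|_|_|_|m
      · omega
      · omega
      · -- k = 2
        have heq : U g1 h 2 u1 =
            u1 + h ^ 2 * ((((2:ℕ) : ℝ) - 1) / 2 * g1 u1 +
              ∑ j ∈ Finset.Icc 2 ((2:ℕ) - 1), (((2:ℕ) : ℝ) - (j : ℝ)) * g1 (U g1 h j u1)) := by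
          have hu : U g1 h 2 u1 = u1 + h ^ 2 / 2 * g1 u1 := rfl
          rw [hu, show (2:ℕ) - 1 = 1 from rfl, show Finset.Icc 2 1 = (∅ : Finset ℕ) from
            Finset.Icc_eq_empty (by norm_num), Finset.sum_empty]
          push_cast
          ring
        exact ⟨heq, hposform 2 le_rfl (by intro j hj; simp at hj) heq⟩
      · -- k = 3
        have e2 : U g1 h 2 u1 = u1 + h ^ 2 / 2 * g1 u1 := rfl
        have heq : U g1 h 3 u1 =
            u1 + h ^ 2 * ((((3:ℕ) : ℝ) - 1) / 2 * g1 u1 +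
              ∑ j ∈ Finset.Icc 2 ((3:ℕ) - 1), (((3:ℕ) : ℝ) - (j : ℝ)) * g1 (U g1 h j u1)) := by
          have h3 : U g1 h 3 u1 = 2 * U g1 h 2 u1 - U g1 h 1 u1 + h^2 * g1 (U g1 h 2 u1) := rfl
          have h1 : U g1 h 1 u1 = u1 := rfl
          rw [h3, h1, show (3:ℕ) - 1 = 2 from rfl, Finset.Icc_self, Finset.sum_singleton]
          rw [e2]
          push_cast
          ring
        refine ⟨heq, hposform 3 (by norm_num) ?_ heq⟩
        intro j hj
        simp only [Finset.mem_Icc] at hj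
        have : j = 2 := by omega
        subst this
        rw [e2]
        nlinarith [sq_nonneg h, hg1pos u1 hu1]
      · -- k = m + 4
        have e3 := (ih (m+3) (by omega) (by omega)).1
        have e2 := (ih (m+2) (by omega) (by omega)).1
        rw [show m+3-1 = m+2 from rfl] at e3
        rw [show m+2-1 = m+1 from rfl] at e2
        have hU : U g1 h (m+4) u1 =
            2 * U g1 h (m+3) u1 - U g1 h (m+2) u1 + h^2 * g1 (U g1 h (m+3) u1) := rfl
        have hs : ∑ j ∈ Finset.Icc 2 (m+1), (((m:ℝ)+4) - (j:ℝ)) * g1 (U g1 h j u1)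
            = 2 * ∑ j ∈ Finset.Icc 2 (m+1), (((m:ℝ)+3) - (j:ℝ)) * g1 (U g1 h j u1)
              - ∑ j ∈ Finset.Icc 2 (m+1), (((m:ℝ)+2) - (j:ℝ)) * g1 (U g1 h j u1) := by
          rw [Finset.mul_sum, ← Finset.sum_sub_distrib]
          exact Finset.sum_congr rfl (fun j _ => by ring)
        have heq : U g1 h (m+4) u1 =
            u1 + h ^ 2 * ((((m+4 : ℕ) : ℝ) - 1) / 2 * g1 u1 +
              ∑ j ∈ Finset.Icc 2 ((m+4) - 1), (((m+4 : ℕ) : ℝ) - (j : ℝ)) * g1 (U g1 h j u1)) := by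
          rw [show m+4-1 = m+3 from rfl]
          rw [Finset.sum_Icc_succ_top (by omega : 2 ≤ m+3)]
          rw [Finset.sum_Icc_succ_top (by omega : 2 ≤ m+2)]
          rw [Finset.sum_Icc_succ_top (by omega : 2 ≤ m+2)] at e3
          rw [hU, e3, e2]
          push_cast
          linear_combination (-(h^2)) * hs
        refine ⟨heq, hposform (m+4) (by omega) ?_ heq⟩
        intro j hj
        rw [Finset.mem_Icc] at hj
        exact (ih j (by omega) (by omega)).2
  exact key k hk2
end

section
/- For every u₁ > 0 and every k with 2 ≤ k ≤ n, the functions U_k are differentiable on (0, ∞) and (U_k' − U_{k−1}')(u₁) = h²·((1/2)·g₁'(u₁) + Σ_{j=2}^{k−1} g₁'(U_j(u₁))·U_j'(u₁)) holds; in particular (U_k' − U_{k−1}')(u₁) > 0. -/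
/-! Differentiating the recursion shows that `U_k'` obeys the linearised recursion
`U_{k+1}' = 2 U_k' - U_{k-1}' + h² g₁'(U_k) U_k'`, so the first differences of `U_k'` telescope
into the stated sum. For positivity, both `k ↦ U_k(u₁)` and `k ↦ U_k'(u₁)` start positive and
nondecreasing and have nonnegative second differences while they stay positive; hence they are
nondecreasing and positive, and every summand is nonnegative. -/

open Finset

noncomputable def dU (g : ℝ → ℝ) (h : ℝ) : ℕ → ℝ → ℝ
  | 0, _ => 1
  | 1, _ => 1
  | 2, x => 1 + h ^ 2 / 2 * deriv g x
  | k + 3, x => 2 * dU g h (k + 2) x - dU g h (k + 1) x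
      + h ^ 2 * (deriv g (U g h (k + 2) x) * dU g h (k + 2) x)

theorem monotone_of_sub_le_sub_of_pos {a : ℕ → ℝ} (h0 : 0 < a 0) (h01 : a 0 ≤ a 1)
    (h12 : a 1 ≤ a 2) (hstep : ∀ k, 0 < a (k + 2) → a (k + 2) - a (k + 1) ≤ a (k + 3) - a (k + 2)) :
    Monotone a := by
  have key : ∀ k, a 0 ≤ a (k + 1) ∧ a k ≤ a (k + 1) ∧ a (k + 1) ≤ a (k + 2) := by
    intro k
    induction k with
    | zero => exact ⟨h01, h01, h12⟩
    | succ k ih =>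
      obtain ⟨hfirst, -, hlast⟩ := ih
      have := hstep k (by linarith)
      exact ⟨hfirst.trans hlast, hlast, by linarith⟩
  exact monotone_nat_of_le_succ fun k => (key k).2.1

section

variable {g : ℝ → ℝ} {h x : ℝ}

theorem hasDerivAt_U (hg : Differentiable ℝ g) (j : ℕ) :
    HasDerivAt (U g h j) (dU g h j x) x := by
  induction j using Nat.strong_induction_on with
  | _ j ih =>
    match j with
    | 0 => exact hasDerivAt_id x
    | 1 => exact hasDerivAt_id x
    | 2 => exact (hasDerivAt_id x).add ((hg x).hasDerivAt.const_mul (h ^ 2 / 2))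
    | m + 3 =>
      exact (((ih (m + 2) (by omega)).const_mul 2).sub (ih (m + 1) (by omega))).add
        (((hg _).hasDerivAt.comp x (ih (m + 2) (by omega))).const_mul (h ^ 2))

theorem dU_sub_dU_pred (k : ℕ) (hk : 2 ≤ k) :
    dU g h k x - dU g h (k - 1) x = h ^ 2 * (1 / 2 * deriv g x +
      ∑ j ∈ Icc 2 (k - 1), deriv g (U g h j x) * dU g h j x) := by
  obtain ⟨m, rfl⟩ : ∃ m, k = m + 2 := ⟨k - 2, by omega⟩
  rw [show m + 2 - 1 = m + 1 by omega]
  clear hk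
  induction m with
  | zero =>
    simp only [dU, zero_add, Icc_eq_empty_of_lt one_lt_two, sum_empty]
    ring
  | succ m ih =>
    rw [sum_Icc_succ_top (by omega)]
    simp only [dU]
    linear_combination ih

theorem monotone_U (hg : ∀ y > 0, 0 ≤ g y) (hx : 0 < x) : Monotone (U g h · x) := by
  refine monotone_of_sub_le_sub_of_pos hx le_rfl ?_ fun k hk => ?_
  · simp only [U]
    nlinarith [hg x hx, sq_nonneg h]
  · simp only [U]
    nlinarith [hg _ hk, sq_nonneg h]

theorem U_pos (hg : ∀ y > 0, 0 ≤ g y) (hx : 0 < x) (k : ℕ) : 0 < U g h k x :=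
  hx.trans_le (monotone_U hg hx (Nat.zero_le k))

theorem dU_pos (hg : ∀ y > 0, 0 ≤ g y) (hg' : ∀ y > 0, 0 ≤ deriv g y) (hx : 0 < x) (k : ℕ) :
    0 < dU g h k x := by
  have hmono : Monotone (dU g h · x) := by
    refine monotone_of_sub_le_sub_of_pos one_pos le_rfl ?_ fun k hk => ?_
    · simp only [dU]
      nlinarith [hg' x hx, sq_nonneg h]
    · simp only [dU]
      nlinarith [mul_nonneg (hg' _ (U_pos (h := h) hg hx (k + 2))) hk.le, sq_nonneg h]
  exact one_pos.trans_le (hmono (Nat.zero_le k))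

end

theorem stmt2_general
    (g1 : ℝ → ℝ)
    (hg1C : ContDiff ℝ 3 g1)
    (hg10 : g1 0 = 0)
    (hg1d1 : ∀ x > 0, 0 < deriv g1 x)
    (n : ℕ) (hn : 2 ≤ n) (h : ℝ) (hh : h = 1 / ((n : ℝ) - 1))
    (u1 : ℝ) (hu1 : 0 < u1) (k : ℕ) (hk2 : 2 ≤ k) :
    (∀ j, 1 ≤ j → j ≤ n → ∀ x > (0 : ℝ), DifferentiableAt ℝ (U g1 h j) x) ∧
    deriv (U g1 h k) u1 - deriv (U g1 h (k - 1)) u1 =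
      h ^ 2 * (1 / 2 * deriv g1 u1 +
        ∑ j ∈ Finset.Icc 2 (k - 1), deriv g1 (U g1 h j u1) * deriv (U g1 h j) u1) ∧
    0 < deriv (U g1 h k) u1 - deriv (U g1 h (k - 1)) u1 := by
  have hg : Differentiable ℝ g1 := hg1C.differentiable (by norm_num)
  have hderiv (j : ℕ) (x : ℝ) : deriv (U g1 h j) x = dU g1 h j x :=
    (hasDerivAt_U hg j).deriv
  have hg1pos : ∀ y > 0, 0 ≤ g1 y := fun y hy => by
    have hmono := strictMonoOn_of_deriv_pos (convex_Ici 0) hg.continuous.continuousOn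
      (by rw [interior_Ici]; exact fun y hy => hg1d1 y hy)
    simpa only [hg10] using (hmono Set.self_mem_Ici hy.le hy).le
  have hg1' : ∀ y > 0, 0 ≤ deriv g1 y := fun y hy => (hg1d1 y hy).le
  have hpos : 0 < h := by
    rw [hh]
    have : (2 : ℝ) ≤ n := by exact_mod_cast hn
    exact one_div_pos.mpr (by linarith)
  have hformula := dU_sub_dU_pred (g := g1) (h := h) (x := u1) k hk2
  simp only [hderiv]
  refine ⟨fun j _ _ x _ => (hasDerivAt_U hg j).differentiableAt, hformula, ?_⟩
  rw [hformula]
  have hsum : 0 ≤ ∑ j ∈ Icc 2 (k - 1), deriv g1 (U g1 h j u1) * dU g1 h j u1 :=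
    sum_nonneg fun j _ =>
      mul_nonneg (hg1' _ (U_pos hg1pos hu1 j)) (dU_pos hg1pos hg1' hu1 j).le
  exact mul_pos (pow_pos hpos 2) (by linarith [hg1d1 u1 hu1])

theorem stmt2
    (g1 g2 : ℝ → ℝ)
    (hg1C : ContDiff ℝ 3 g1) (hg2C : ContDiff ℝ 3 g2)
    (hg1A : AnalyticAt ℝ g1 0) (hg2A : AnalyticAt ℝ g2 0)
    (hg10 : g1 0 = 0) (hg20 : g2 0 = 0)
    (hg1d1 : ∀ x > 0, 0 < deriv g1 x) (hg2d1 : ∀ x > 0, 0 < deriv g2 x)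
    (hg1d2 : ∀ x > 0, 0 < iteratedDeriv 2 g1 x) (hg2d2 : ∀ x > 0, 0 < iteratedDeriv 2 g2 x)
    (hg1d3 : ∀ x > 0, 0 ≤ iteratedDeriv 3 g1 x) (hg2d3 : ∀ x > 0, 0 ≤ iteratedDeriv 3 g2 x)
    (n : ℕ) (hn : 2 ≤ n) (h : ℝ) (hh : h = 1 / ((n : ℝ) - 1))
    (u1 : ℝ) (hu1 : 0 < u1) (k : ℕ) (hk2 : 2 ≤ k) (hkn : k ≤ n) :
    (∀ j, 1 ≤ j → j ≤ n → ∀ x > (0 : ℝ), DifferentiableAt ℝ (U g1 h j) x) ∧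
    deriv (U g1 h k) u1 - deriv (U g1 h (k - 1)) u1 =
      h ^ 2 * (1 / 2 * deriv g1 u1 +
        ∑ j ∈ Finset.Icc 2 (k - 1), deriv g1 (U g1 h j u1) * deriv (U g1 h j) u1) ∧
    0 < deriv (U g1 h k) u1 - deriv (U g1 h (k - 1)) u1 :=
  stmt2_general g1 hg1C hg10 hg1d1 n hn h hh u1 hu1 k hk2
end

section
/- For every u₁ > 0 and every k with 2 ≤ k ≤ n, the identity U_k'(u₁) = 1 + h²·(((k−1)/2)·g₁'(u₁) + Σ_{j=2}^{k−1} (k − j)·g₁'(U_j(u₁))·U_j'(u₁)) holds, and in particular U_k'(u₁) > 1. -/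
open Finset

lemma U_one_eq (g1 : ℝ → ℝ) (h : ℝ) : U g1 h 1 = fun u => u := rfl

lemma U_two_eq (g1 : ℝ → ℝ) (h : ℝ) : U g1 h 2 = fun u => u + h ^ 2 / 2 * g1 u := rfl

lemma U_rec_eq (g1 : ℝ → ℝ) (h : ℝ) (k : ℕ) :
    U g1 h (k + 3) = fun u =>
      2 * U g1 h (k + 2) u - U g1 h (k + 1) u + h ^ 2 * g1 (U g1 h (k + 2) u) := rfl

lemma U_diff (g1 : ℝ → ℝ) (h : ℝ) (hg : Differentiable ℝ g1) :
    ∀ k, Differentiable ℝ (U g1 h k) := by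
  intro k
  induction k using Nat.strong_induction_on with
  | _ k ih =>
    match k with
    | 0 => exact differentiable_id
    | 1 => exact differentiable_id
    | 2 =>
      rw [U_two_eq]
      exact differentiable_id.add (hg.const_mul _)
    | (k + 3) =>
      rw [U_rec_eq]
      exact (((ih (k + 2) (by omega)).const_mul 2).sub (ih (k + 1) (by omega))).add
        ((hg.comp (ih (k + 2) (by omega))).const_mul _)

lemma U_deriv_one (g1 : ℝ → ℝ) (h : ℝ) (u : ℝ) : deriv (U g1 h 1) u = 1 := by
  rw [U_one_eq]; simp

lemma U_deriv_two (g1 : ℝ → ℝ) (h : ℝ) (hg : Differentiable ℝ g1) (u : ℝ) :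
    deriv (U g1 h 2) u = 1 + h ^ 2 / 2 * deriv g1 u := by
  rw [U_two_eq]
  have : HasDerivAt (fun u : ℝ => u + h ^ 2 / 2 * g1 u) (1 + h ^ 2 / 2 * deriv g1 u) u :=
    (hasDerivAt_id u).add (((hg u).hasDerivAt).const_mul (h ^ 2 / 2))
  exact this.deriv

lemma U_deriv_rec (g1 : ℝ → ℝ) (h : ℝ) (hg : Differentiable ℝ g1) (k : ℕ) (u : ℝ) :
    deriv (U g1 h (k + 3)) u = 2 * deriv (U g1 h (k + 2)) u - deriv (U g1 h (k + 1)) u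
      + h ^ 2 * (deriv g1 (U g1 h (k + 2) u) * deriv (U g1 h (k + 2)) u) := by
  rw [U_rec_eq]
  have hf : HasDerivAt (U g1 h (k + 2)) (deriv (U g1 h (k + 2)) u) u :=
    ((U_diff g1 h hg (k + 2)) u).hasDerivAt
  have hgg : HasDerivAt (U g1 h (k + 1)) (deriv (U g1 h (k + 1)) u) u :=
    ((U_diff g1 h hg (k + 1)) u).hasDerivAt
  have hc : HasDerivAt (fun u => g1 (U g1 h (k + 2) u))
      (deriv g1 (U g1 h (k + 2) u) * deriv (U g1 h (k + 2)) u) u :=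
    ((hg _).hasDerivAt).comp u hf
  exact (((hf.const_mul 2).sub hgg).add (hc.const_mul (h ^ 2))).deriv

lemma g1_pos_of (g1 : ℝ → ℝ) (hC : Continuous g1) (h0 : g1 0 = 0)
    (hd : ∀ x > 0, 0 < deriv g1 x) : ∀ x > 0, 0 < g1 x := by
  intro x hx
  have hmono : StrictMonoOn g1 (Set.Ici 0) :=
    strictMonoOn_of_deriv_pos (convex_Ici 0) hC.continuousOn
      (by simpa [interior_Ici] using hd)
  have := hmono Set.self_mem_Ici (Set.mem_Ici.mpr hx.le) hx
  simpa [h0] using this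

lemma U_ge (g1 : ℝ → ℝ) (h : ℝ) (hgpos : ∀ x > 0, 0 < g1 x) {u1 : ℝ} (hu1 : 0 < u1) :
    ∀ k, u1 ≤ U g1 h k u1 ∧ U g1 h k u1 ≤ U g1 h (k + 1) u1 := by
  intro k
  induction k with
  | zero => exact ⟨le_refl _, le_refl _⟩
  | succ k ih =>
    have h1 : u1 ≤ U g1 h (k + 1) u1 := le_trans ih.1 ih.2
    refine ⟨h1, ?_⟩
    match k with
    | 0 =>
      have hp := hgpos u1 hu1
      show (u1 : ℝ) ≤ u1 + h ^ 2 / 2 * g1 u1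
      nlinarith [sq_nonneg h]
    | (m + 1) =>
      have hp := hgpos _ (lt_of_lt_of_le hu1 h1)
      show U g1 h (m + 2) u1 ≤
        2 * U g1 h (m + 2) u1 - U g1 h (m + 1) u1 + h ^ 2 * g1 (U g1 h (m + 2) u1)
      nlinarith [ih.2, sq_nonneg h]

theorem stmt3
    (g1 g2 : ℝ → ℝ)
    (hg1C : ContDiff ℝ 3 g1) (hg2C : ContDiff ℝ 3 g2)
    (hg1A : AnalyticAt ℝ g1 0) (hg2A : AnalyticAt ℝ g2 0)
    (hg10 : g1 0 = 0) (hg20 : g2 0 = 0)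
    (hg1d1 : ∀ x > 0, 0 < deriv g1 x) (hg2d1 : ∀ x > 0, 0 < deriv g2 x)
    (hg1d2 : ∀ x > 0, 0 < iteratedDeriv 2 g1 x) (hg2d2 : ∀ x > 0, 0 < iteratedDeriv 2 g2 x)
    (hg1d3 : ∀ x > 0, 0 ≤ iteratedDeriv 3 g1 x) (hg2d3 : ∀ x > 0, 0 ≤ iteratedDeriv 3 g2 x)
    (n : ℕ) (hn : 2 ≤ n) (h : ℝ) (hh : h = 1 / ((n : ℝ) - 1))
    (u1 : ℝ) (hu1 : 0 < u1) (k : ℕ) (hk2 : 2 ≤ k) (hkn : k ≤ n) :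
    deriv (U g1 h k) u1 =
      1 + h ^ 2 * (((k : ℝ) - 1) / 2 * deriv g1 u1 +
        ∑ j ∈ Finset.Icc 2 (k - 1),
          ((k : ℝ) - (j : ℝ)) * deriv g1 (U g1 h j u1) * deriv (U g1 h j) u1) ∧
    1 < deriv (U g1 h k) u1 := by
  have hgdiff : Differentiable ℝ g1 := hg1C.differentiable (by norm_num)
  have hgpos : ∀ x > 0, 0 < g1 x := g1_pos_of g1 hgdiff.continuous hg10 hg1d1
  have hge := U_ge g1 h hgpos hu1
  have hUpos : ∀ j, 0 < U g1 h j u1 := fun j => lt_of_lt_of_le hu1 (hge j).1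
  have hh2 : 0 < h ^ 2 := by
    have h2 : (2 : ℝ) ≤ (n : ℝ) := by exact_mod_cast hn
    rw [hh]
    have : (0 : ℝ) < (n : ℝ) - 1 := by linarith
    positivity
  have hA : 0 < deriv g1 u1 := hg1d1 u1 hu1
  have posstep : ∀ k, 2 ≤ k → (∀ j, 2 ≤ j → j < k → 1 < deriv (U g1 h j) u1) →
      deriv (U g1 h k) u1 =
        1 + h ^ 2 * (((k : ℝ) - 1) / 2 * deriv g1 u1 +
          ∑ j ∈ Finset.Icc 2 (k - 1),
            ((k : ℝ) - (j : ℝ)) * deriv g1 (U g1 h j u1) * deriv (U g1 h j) u1) →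
      1 < deriv (U g1 h k) u1 := by
    intro k hk ihpos hf
    rw [hf]
    have hsum : 0 ≤ ∑ j ∈ Finset.Icc 2 (k - 1),
        ((k : ℝ) - (j : ℝ)) * deriv g1 (U g1 h j u1) * deriv (U g1 h j) u1 := by
      apply Finset.sum_nonneg
      intro j hj
      rw [Finset.mem_Icc] at hj
      have hjk : (j : ℝ) ≤ (k : ℝ) := by
        exact_mod_cast le_trans hj.2 (Nat.sub_le k 1)
      have h2 := hg1d1 _ (hUpos j)
      have h3 := ihpos j hj.1 (by omega)
      have h4 : (0 : ℝ) ≤ (k : ℝ) - (j : ℝ) := by linarith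
      exact mul_nonneg (mul_nonneg h4 h2.le) (by linarith)
    have hk1 : (1 : ℝ) ≤ (k : ℝ) - 1 := by
      have : (2 : ℝ) ≤ (k : ℝ) := by exact_mod_cast hk
      linarith
    nlinarith [mul_pos hh2 hA]
  have key : ∀ k, 2 ≤ k →
      deriv (U g1 h k) u1 =
        1 + h ^ 2 * (((k : ℝ) - 1) / 2 * deriv g1 u1 +
          ∑ j ∈ Finset.Icc 2 (k - 1),
            ((k : ℝ) - (j : ℝ)) * deriv g1 (U g1 h j u1) * deriv (U g1 h j) u1) ∧
      1 < deriv (U g1 h k) u1 := by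
    intro k
    induction k using Nat.strong_induction_on with
    | _ k ih =>
      intro hk
      match k with
      | 0 => omega
      | 1 => omega
      | 2 =>
        have hf : deriv (U g1 h 2) u1 =
            1 + h ^ 2 * ((((2 : ℕ) : ℝ) - 1) / 2 * deriv g1 u1 +
              ∑ j ∈ Finset.Icc 2 (2 - 1 : ℕ),
                (((2 : ℕ) : ℝ) - (j : ℝ)) * deriv g1 (U g1 h j u1) * deriv (U g1 h j) u1) := by
          rw [U_deriv_two g1 h hgdiff u1,
            show (2 - 1 : ℕ) = 1 from rfl, Finset.Icc_eq_empty (by omega), Finset.sum_empty]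
          push_cast
          ring
        exact ⟨hf, posstep 2 le_rfl (fun j h1 h2 => absurd h1 (by omega)) hf⟩
      | 3 =>
        have hrec := U_deriv_rec g1 h hgdiff 0 u1
        norm_num at hrec
        have hf : deriv (U g1 h 3) u1 =
            1 + h ^ 2 * ((((3 : ℕ) : ℝ) - 1) / 2 * deriv g1 u1 +
              ∑ j ∈ Finset.Icc 2 (3 - 1 : ℕ),
                (((3 : ℕ) : ℝ) - (j : ℝ)) * deriv g1 (U g1 h j u1) * deriv (U g1 h j) u1) := by
          rw [hrec, U_deriv_one, U_deriv_two g1 h hgdiff u1,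
            show (3 - 1 : ℕ) = 2 from rfl, Finset.Icc_self, Finset.sum_singleton,
            U_deriv_two g1 h hgdiff u1]
          push_cast
          ring
        refine ⟨hf, posstep 3 (by omega) (fun j h1 h2 => ?_) hf⟩
        have hj2 : j = 2 := by omega
        subst hj2
        exact (ih 2 (by omega) (by omega)).2
      | (m + 4) =>
        have e3 := (ih (m + 3) (by omega) (by omega)).1
        have e2 := (ih (m + 2) (by omega) (by omega)).1
        have hrec := U_deriv_rec g1 h hgdiff (m + 1) u1
        rw [show (m + 1 + 3 : ℕ) = m + 4 by omega, show (m + 1 + 2 : ℕ) = m + 3 by omega,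
          show (m + 1 + 1 : ℕ) = m + 2 by omega] at hrec
        simp only [show (m + 3 - 1 : ℕ) = m + 2 by omega] at e3
        simp only [show (m + 2 - 1 : ℕ) = m + 1 by omega] at e2
        have hcomb : ∑ j ∈ Finset.Icc 2 (m + 1),
            (((m + 4 : ℕ) : ℝ) - (j : ℝ)) * deriv g1 (U g1 h j u1) * deriv (U g1 h j) u1
          = ∑ j ∈ Finset.Icc 2 (m + 1),
            (2 * ((((m + 3 : ℕ) : ℝ) - (j : ℝ)) * deriv g1 (U g1 h j u1) * deriv (U g1 h j) u1)
              - (((m + 2 : ℕ) : ℝ) - (j : ℝ)) * deriv g1 (U g1 h j u1) * deriv (U g1 h j) u1) := by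
          refine Finset.sum_congr rfl fun j hj => ?_
          push_cast
          ring
        have hS : (∑ j ∈ Finset.Icc 2 (m + 3),
              (((m + 4 : ℕ) : ℝ) - (j : ℝ)) * deriv g1 (U g1 h j u1) * deriv (U g1 h j) u1)
            = 2 * (∑ j ∈ Finset.Icc 2 (m + 2),
              (((m + 3 : ℕ) : ℝ) - (j : ℝ)) * deriv g1 (U g1 h j u1) * deriv (U g1 h j) u1)
            - (∑ j ∈ Finset.Icc 2 (m + 1),
              (((m + 2 : ℕ) : ℝ) - (j : ℝ)) * deriv g1 (U g1 h j u1) * deriv (U g1 h j) u1)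
            + deriv g1 (U g1 h (m + 3) u1) * deriv (U g1 h (m + 3)) u1 := by
          rw [Finset.sum_Icc_succ_top (show (2 : ℕ) ≤ m + 3 by omega)]
          rw [Finset.sum_Icc_succ_top (show (2 : ℕ) ≤ m + 2 by omega)]
          rw [Finset.sum_Icc_succ_top (show (2 : ℕ) ≤ m + 2 by omega)]
          rw [hcomb, Finset.sum_sub_distrib, ← Finset.mul_sum]
          push_cast
          ring
        have hf : deriv (U g1 h (m + 4)) u1 =
            1 + h ^ 2 * ((((m + 4 : ℕ) : ℝ) - 1) / 2 * deriv g1 u1 +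
              ∑ j ∈ Finset.Icc 2 (m + 4 - 1),
                (((m + 4 : ℕ) : ℝ) - (j : ℝ)) * deriv g1 (U g1 h j u1) * deriv (U g1 h j) u1) := by
          simp only [show (m + 4 - 1 : ℕ) = m + 3 by omega]
          push_cast at e3 e2 hS ⊢
          linear_combination hrec + 2 * e3 - e2 - h ^ 2 * hS
        refine ⟨hf, posstep (m + 4) (by omega) (fun j h1 h2 => (ih j h2 h1).2) hf⟩
  exact key k hk2
end

section
/- For every u₁ > 0 and every k with 2 ≤ k ≤ n, the derivative with respect to u₁ of the function u₁ ↦ (U_k(u₁) − U₁(u₁))/g₁(U_k(u₁)) is strictly negative. -/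
/-!
Write `V k = ∂U k/∂u₁`, `D j = U (j + 1) - U j` and `E j = V (j + 1) - V j`. The claim is
`(V k - 1) g(U k) < (U k - u₁) g'(U k) V k`. Strict convexity of `g` propagates
`E j / D j < g'(U (j + 1)) V (j + 1) / g(U (j + 1))` along the recurrence, and this makes the
ratios `E j / D j` increase. As `V k - 1` and `U k - u₁` are the sums of the `E j` and the `D j`
for `1 ≤ j < k`, their ratio is at most `E (k - 1) / D (k - 1)`, which gives the claim.
-/

open Finset

open Set

noncomputable def V (g : ℝ → ℝ) (h : ℝ) : ℕ → ℝ → ℝ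
  | 0, _ => 1
  | 1, _ => 1
  | 2, u => 1 + h ^ 2 / 2 * deriv g u
  | k + 3, u => 2 * V g h (k + 2) u - V g h (k + 1) u
      + h ^ 2 * (deriv g (U g h (k + 2) u) * V g h (k + 2) u)

-- `a / b ≤ c / d ≤ e / f`, cleared of denominators.
theorem cross_mul_le_trans {a b c d e f : ℝ} (hb : 0 ≤ b) (hd : 0 < d) (hf : 0 ≤ f)
    (h₁ : a * d ≤ b * c) (h₂ : c * f ≤ d * e) : a * f ≤ b * e := by
  refine le_of_mul_le_mul_right ?_ hd
  calc a * f * d = a * d * f := by ring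
    _ ≤ b * c * f := mul_le_mul_of_nonneg_right h₁ hf
    _ = b * (c * f) := by ring
    _ ≤ b * (d * e) := mul_le_mul_of_nonneg_left h₂ hb
    _ = b * e * d := by ring

theorem cross_mul_lt_trans {a b c d e f : ℝ} (hb : 0 < b) (hd : 0 < d) (hf : 0 ≤ f)
    (h₁ : a * d ≤ b * c) (h₂ : c * f < d * e) : a * f < b * e := by
  refine lt_of_mul_lt_mul_right ?_ hd.le
  calc a * f * d = a * d * f := by ring
    _ ≤ b * c * f := mul_le_mul_of_nonneg_right h₁ hf
    _ = b * (c * f) := by ring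
    _ < b * (d * e) := mul_lt_mul_of_pos_left h₂ hb
    _ = b * e * d := by ring

/-- In ratio form: if `(vb - va) / (b - a) ≤ g' a * va / g a`, then
`(vb - va) / (b - a) < g' b * vb / g b`. -/
theorem StrictConvexOn.sub_mul_lt_of_sub_mul_le {g : ℝ → ℝ}
    (hconv : StrictConvexOn ℝ (Ioi 0) g) (hg : Differentiable ℝ g)
    {a b va vb : ℝ} (ha : 0 < a) (hab : a < b) (hva : 0 ≤ va) (hv : va < vb)
    (hle : (vb - va) * g a ≤ (b - a) * (deriv g a * va)) :
    (vb - va) * g b < (b - a) * (deriv g b * vb) := by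
  have hb : b ∈ Ioi (0 : ℝ) := ha.trans hab
  have hslope : g b - g a < deriv g b * (b - a) := by
    have := hconv.slope_lt_deriv ha hb hab (hg b)
    rw [slope_def_field, div_lt_iff₀ (sub_pos.2 hab)] at this
    exact this
  have hmono : deriv g a ≤ deriv g b :=
    (hconv.strictMonoOn_deriv fun x _ => hg x).monotoneOn ha hb hab.le
  calc (vb - va) * g b = (vb - va) * g a + (vb - va) * (g b - g a) := by ring
    _ < (b - a) * (deriv g a * va) + (vb - va) * (deriv g b * (b - a)) :=
        add_lt_add_of_le_of_lt hle (mul_lt_mul_of_pos_left hslope (sub_pos.2 hv))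
    _ ≤ (b - a) * (deriv g b * va) + (vb - va) * (deriv g b * (b - a)) := by
        gcongr
    _ = (b - a) * (deriv g b * vb) := by ring

section Recurrence

variable {g : ℝ → ℝ} {h : ℝ}

theorem hasDerivAt_U_s6 (hg : Differentiable ℝ g) (u : ℝ) :
    ∀ k, HasDerivAt (U g h k) (V g h k u) u
  | 0 => hasDerivAt_id u
  | 1 => hasDerivAt_id u
  | 2 => (hasDerivAt_id u).add ((hg u).hasDerivAt.const_mul _)
  | k + 3 =>
    (((hasDerivAt_U_s6 hg u (k + 2)).const_mul 2).sub (hasDerivAt_U_s6 hg u (k + 1))).add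
      (((hg _).hasDerivAt.comp u (hasDerivAt_U_s6 hg u (k + 2))).const_mul _)

theorem U_sub_U_add_three (k : ℕ) (u : ℝ) :
    U g h (k + 3) u - U g h (k + 2) u
      = U g h (k + 2) u - U g h (k + 1) u + h ^ 2 * g (U g h (k + 2) u) := by
  rw [U]; ring

theorem V_sub_V_add_three (k : ℕ) (u : ℝ) :
    V g h (k + 3) u - V g h (k + 2) u
      = V g h (k + 2) u - V g h (k + 1) u
        + h ^ 2 * (deriv g (U g h (k + 2) u) * V g h (k + 2) u) := by
  rw [V]; ring

end Recurrence

section Inequalities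

variable {g : ℝ → ℝ} {h u : ℝ}

theorem le_U_succ_and_U_succ_lt (hh : h ≠ 0) (hpos : ∀ x > 0, 0 < g x) (hu : 0 < u) :
    ∀ k : ℕ, u ≤ U g h (k + 1) u ∧ U g h (k + 1) u < U g h (k + 2) u
  | 0 => ⟨le_rfl, by
      have := hpos u hu
      show u < u + h ^ 2 / 2 * g u
      exact lt_add_of_pos_right u (by positivity)⟩
  | k + 1 => by
      obtain ⟨hle, hlt⟩ := le_U_succ_and_U_succ_lt hh hpos hu k
      have hg : 0 < g (U g h (k + 2) u) := hpos _ (hu.trans_le (hle.trans hlt.le))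
      have hstep : 0 < h ^ 2 * g (U g h (k + 2) u) := by positivity
      refine ⟨hle.trans hlt.le, ?_⟩
      linarith [U_sub_U_add_three (g := g) (h := h) k u]

theorem U_succ_pos (hh : h ≠ 0) (hpos : ∀ x > 0, 0 < g x) (hu : 0 < u) (k : ℕ) :
    0 < U g h (k + 1) u :=
  hu.trans_le (le_U_succ_and_U_succ_lt hh hpos hu k).1

theorem one_le_V_succ_and_V_succ_lt (hh : h ≠ 0) (hpos : ∀ x > 0, 0 < g x)
    (hderiv : ∀ x > 0, 0 < deriv g x) (hu : 0 < u) :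
    ∀ k : ℕ, 1 ≤ V g h (k + 1) u ∧ V g h (k + 1) u < V g h (k + 2) u
  | 0 => ⟨le_rfl, by
      have := hderiv u hu
      show 1 < 1 + h ^ 2 / 2 * deriv g u
      exact lt_add_of_pos_right 1 (by positivity)⟩
  | k + 1 => by
      obtain ⟨hle, hlt⟩ := one_le_V_succ_and_V_succ_lt hh hpos hderiv hu k
      have hg : 0 < deriv g (U g h (k + 2) u) := hderiv _ (U_succ_pos hh hpos hu (k + 1))
      have hV : 0 < V g h (k + 2) u := by linarith
      have hstep : 0 < h ^ 2 * (deriv g (U g h (k + 2) u) * V g h (k + 2) u) := by positivity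
      refine ⟨hle.trans hlt.le, ?_⟩
      linarith [V_sub_V_add_three (g := g) (h := h) k u]

theorem V_sub_mul_g_lt (hg : Differentiable ℝ g) (hconv : StrictConvexOn ℝ (Ioi 0) g)
    (hh : h ≠ 0) (hpos : ∀ x > 0, 0 < g x) (hderiv : ∀ x > 0, 0 < deriv g x) (hu : 0 < u) :
    ∀ k : ℕ, (V g h (k + 2) u - V g h (k + 1) u) * g (U g h (k + 2) u)
      < (U g h (k + 2) u - U g h (k + 1) u) * (deriv g (U g h (k + 2) u) * V g h (k + 2) u)
  | 0 => by
      refine hconv.sub_mul_lt_of_sub_mul_le hg hu (le_U_succ_and_U_succ_lt hh hpos hu 0).2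
        zero_le_one (one_le_V_succ_and_V_succ_lt hh hpos hderiv hu 0).2 (le_of_eq ?_)
      simp only [U, V]
      ring
  | k + 1 => by
      have ih := V_sub_mul_g_lt hg hconv hh hpos hderiv hu k
      have hle : (V g h (k + 3) u - V g h (k + 2) u) * g (U g h (k + 2) u)
          ≤ (U g h (k + 3) u - U g h (k + 2) u)
            * (deriv g (U g h (k + 2) u) * V g h (k + 2) u) := by
        rw [U_sub_U_add_three, V_sub_V_add_three]
        linarith
      exact hconv.sub_mul_lt_of_sub_mul_le hg (U_succ_pos hh hpos hu (k + 1))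
        (le_U_succ_and_U_succ_lt hh hpos hu (k + 1)).2
        (zero_le_one.trans (one_le_V_succ_and_V_succ_lt hh hpos hderiv hu (k + 1)).1)
        (one_le_V_succ_and_V_succ_lt hh hpos hderiv hu (k + 1)).2 hle

/-- Mediant inequality: `V - 1` and `U - u` are the sums of the increments `V (j + 1) - V j`
and `U (j + 1) - U j`, whose ratios increase with `j`. -/
theorem V_sub_one_mul_le (hg : Differentiable ℝ g) (hconv : StrictConvexOn ℝ (Ioi 0) g)
    (hh : h ≠ 0) (hpos : ∀ x > 0, 0 < g x) (hderiv : ∀ x > 0, 0 < deriv g x) (hu : 0 < u) :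
    ∀ k : ℕ, (V g h (k + 2) u - 1) * (U g h (k + 2) u - U g h (k + 1) u)
      ≤ (U g h (k + 2) u - u) * (V g h (k + 2) u - V g h (k + 1) u)
  | 0 => le_of_eq (by simp only [U, V]; ring)
  | k + 1 => by
      have ih := V_sub_one_mul_le hg hconv hh hpos hderiv hu k
      have hU := le_U_succ_and_U_succ_lt hh hpos hu
      have hratio : (V g h (k + 2) u - V g h (k + 1) u) * (U g h (k + 3) u - U g h (k + 2) u)
          ≤ (U g h (k + 2) u - U g h (k + 1) u) * (V g h (k + 3) u - V g h (k + 2) u) := by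
        rw [U_sub_U_add_three, V_sub_V_add_three]
        nlinarith [mul_le_mul_of_nonneg_left (V_sub_mul_g_lt hg hconv hh hpos hderiv hu k).le
          (sq_nonneg h)]
      have hmediant := cross_mul_le_trans (by linarith [(hU k).1, (hU k).2])
        (sub_pos.2 (hU k).2) (sub_nonneg.2 (hU (k + 1)).2.le) ih hratio
      linarith

theorem V_sub_one_mul_g_lt (hg : Differentiable ℝ g) (hconv : StrictConvexOn ℝ (Ioi 0) g)
    (hh : h ≠ 0) (hpos : ∀ x > 0, 0 < g x) (hderiv : ∀ x > 0, 0 < deriv g x) (hu : 0 < u)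
    (k : ℕ) :
    (V g h (k + 2) u - 1) * g (U g h (k + 2) u)
      < (U g h (k + 2) u - u) * (deriv g (U g h (k + 2) u) * V g h (k + 2) u) := by
  have hU := le_U_succ_and_U_succ_lt hh hpos hu k
  exact cross_mul_lt_trans (by linarith) (sub_pos.2 hU.2)
    (hpos _ (U_succ_pos hh hpos hu (k + 1))).le (V_sub_one_mul_le hg hconv hh hpos hderiv hu k)
    (V_sub_mul_g_lt hg hconv hh hpos hderiv hu k)

end Inequalities

theorem stmt6_general
    (g1 : ℝ → ℝ)
    (hg1C : ContDiff ℝ 3 g1)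
    (hg10 : g1 0 = 0)
    (hg1d1 : ∀ x > 0, 0 < deriv g1 x)
    (hg1d2 : ∀ x > 0, 0 < iteratedDeriv 2 g1 x)
    (n : ℕ) (hn : 2 ≤ n) (h : ℝ) (hh : h = 1 / ((n : ℝ) - 1))
    (u1 : ℝ) (hu1 : 0 < u1) (k : ℕ) (hk2 : 2 ≤ k) :
    deriv (fun x => (U g1 h k x - U g1 h 1 x) / g1 (U g1 h k x)) u1 < 0 := by
  have hg : Differentiable ℝ g1 := hg1C.differentiable (by norm_num)
  have hconv : StrictConvexOn ℝ (Ioi 0) g1 :=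
    strictConvexOn_of_deriv2_pos (convex_Ioi 0) hg.continuous.continuousOn fun x hx => by
      rw [interior_Ioi] at hx
      simpa [iteratedDeriv_eq_iterate] using hg1d2 x hx
  have hpos : ∀ x > 0, 0 < g1 x := fun x hx => hg10 ▸
    strictMonoOn_of_deriv_pos (convex_Ici 0) hg.continuous.continuousOn (by simpa using hg1d1)
      self_mem_Ici hx.le hx
  have hh0 : h ≠ 0 := by
    have : (2 : ℝ) ≤ n := by exact_mod_cast hn
    rw [hh]
    exact one_div_ne_zero (by linarith)
  obtain ⟨j, rfl⟩ := Nat.exists_eq_add_of_le' hk2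
  have hUj := hasDerivAt_U_s6 (h := h) hg u1 (j + 2)
  have hgU := hpos _ (U_succ_pos hh0 hpos hu1 (j + 1))
  have hquot :
      HasDerivAt (fun x => (U g1 h (j + 2) x - U g1 h 1 x) / g1 (U g1 h (j + 2) x)) _ u1 :=
    (hUj.sub (hasDerivAt_U_s6 (h := h) hg u1 1)).div ((hg _).hasDerivAt.comp u1 hUj) hgU.ne'
  rw [hquot.deriv, Pi.sub_apply]
  exact div_neg_of_neg_of_pos (sub_neg.2 (V_sub_one_mul_g_lt hg hconv hh0 hpos hg1d1 hu1 j))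
    (pow_pos hgU 2)

theorem stmt6
    (g1 g2 : ℝ → ℝ)
    (hg1C : ContDiff ℝ 3 g1) (hg2C : ContDiff ℝ 3 g2)
    (hg1A : AnalyticAt ℝ g1 0) (hg2A : AnalyticAt ℝ g2 0)
    (hg10 : g1 0 = 0) (hg20 : g2 0 = 0)
    (hg1d1 : ∀ x > 0, 0 < deriv g1 x) (hg2d1 : ∀ x > 0, 0 < deriv g2 x)
    (hg1d2 : ∀ x > 0, 0 < iteratedDeriv 2 g1 x) (hg2d2 : ∀ x > 0, 0 < iteratedDeriv 2 g2 x)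
    (hg1d3 : ∀ x > 0, 0 ≤ iteratedDeriv 3 g1 x) (hg2d3 : ∀ x > 0, 0 ≤ iteratedDeriv 3 g2 x)
    (n : ℕ) (hn : 2 ≤ n) (h : ℝ) (hh : h = 1 / ((n : ℝ) - 1))
    (u1 : ℝ) (hu1 : 0 < u1) (k : ℕ) (hk2 : 2 ≤ k) (hkn : k ≤ n) :
    deriv (fun x => (U g1 h k x - U g1 h 1 x) / g1 (U g1 h k x)) u1 < 0 :=
  stmt6_general g1 hg1C hg10 hg1d1 hg1d2 n hn h hh u1 hu1 k hk2
end

section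
/- Let (α, u₁, …, u_n) ∈ (0, ∞)^{n+1} be a positive solution of the discrete system (S). Then α·g₂(u_n) < g₁(u_n). -/
open Finset

/-- `(α, u 1, …, u n)` is a positive solution of the discrete system (S). -/
def IsSolution (g1 g2 : ℝ → ℝ) (n : ℕ) (h α : ℝ) (u : ℕ → ℝ) : Prop :=
  (∀ k, 1 ≤ k → k ≤ n → 0 < u k) ∧
  u 2 - u 1 = h ^ 2 / 2 * g1 (u 1) ∧
  (∀ k, 2 ≤ k → k ≤ n - 1 → u (k + 1) - 2 * u k + u (k - 1) = h ^ 2 * g1 (u k)) ∧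
  u n - u (n - 1) + h ^ 2 / 2 * g1 (u n) = h * α * g2 (u n)

theorem stmt12
    (g1 g2 : ℝ → ℝ)
    (hg1C : ContDiff ℝ 3 g1) (hg2C : ContDiff ℝ 3 g2)
    (hg1A : AnalyticAt ℝ g1 0) (hg2A : AnalyticAt ℝ g2 0)
    (hg10 : g1 0 = 0) (hg20 : g2 0 = 0)
    (hg1d1 : ∀ x > 0, 0 < deriv g1 x) (hg2d1 : ∀ x > 0, 0 < deriv g2 x)
    (hg1d2 : ∀ x > 0, 0 < iteratedDeriv 2 g1 x) (hg2d2 : ∀ x > 0, 0 < iteratedDeriv 2 g2 x)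
    (hg1d3 : ∀ x > 0, 0 ≤ iteratedDeriv 3 g1 x) (hg2d3 : ∀ x > 0, 0 ≤ iteratedDeriv 3 g2 x)
    (n : ℕ) (hn : 2 ≤ n) (h : ℝ) (hh : h = 1 / ((n : ℝ) - 1))
    (α : ℝ) (hα : 0 < α) (u : ℕ → ℝ)
    (hsol : IsSolution g1 g2 n h α u) :
    α * g2 (u n) < g1 (u n) := by
  obtain ⟨hpos, heq1, heqk, heqn⟩ := hsol
  have hn1 : (1:ℝ) ≤ (n:ℝ) - 1 := by
    have : (2:ℝ) ≤ (n:ℝ) := by exact_mod_cast hn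
    linarith
  have hh0 : 0 < h := by rw [hh]; positivity
  have hhn : h * ((n:ℝ) - 1) = 1 := by
    rw [hh]; field_simp
  -- g1 strictly monotone on [0,∞)
  have hmono : StrictMonoOn g1 (Set.Ici 0) := by
    apply strictMonoOn_of_deriv_pos (convex_Ici 0) hg1C.continuous.continuousOn
    intro x hx
    rw [interior_Ici] at hx
    exact hg1d1 x hx
  have hg1pos : ∀ x > 0, 0 < g1 x := by
    intro x hx
    have := hmono (Set.self_mem_Ici) (Set.mem_Ici.2 hx.le) hx
    rwa [hg10] at this
  -- increments are positive
  have hd : ∀ k, 1 ≤ k → k ≤ n - 1 → 0 < u (k + 1) - u k := by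
    intro k hk1
    induction k, hk1 using Nat.le_induction with
    | base =>
      intro _
      rw [heq1]
      have := hg1pos (u 1) (hpos 1 le_rfl (by omega))
      positivity
    | succ k hk ih =>
      intro hkle
      have hk' : k ≤ n - 1 := by omega
      have ihp := ih hk'
      have heq := heqk (k + 1) (by omega) hkle
      simp only [Nat.add_sub_cancel] at heq
      have hup : 0 < u (k + 1) := hpos (k + 1) (by omega) (by omega)
      have := hg1pos (u (k + 1)) hup
      nlinarith
  -- u k < u m for 1 ≤ k < m ≤ n
  have hlt : ∀ m, m ≤ n → ∀ k, 1 ≤ k → k < m → u k < u m := by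
    intro m
    induction m with
    | zero => omega
    | succ m ih =>
      intro hm k hk1 hkm
      have hstep : u m < u (m + 1) := by
        have := hd m (by omega) (by omega)
        linarith
      rcases eq_or_lt_of_le (Nat.lt_succ_iff.mp hkm) with rfl | hkm'
      · exact hstep
      · exact lt_trans (ih (by omega) k hk1 hkm') hstep
  have hun : 0 < u n := hpos n (by omega) le_rfl
  have hg1un : 0 < g1 (u n) := hg1pos _ hun
  have hg1lt : ∀ k, 1 ≤ k → k < n → g1 (u k) < g1 (u n) := by
    intro k hk1 hkn
    exact hmono (Set.mem_Ici.2 (hpos k hk1 (by omega)).le) (Set.mem_Ici.2 hun.le)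
      (hlt n le_rfl k hk1 hkn)
  -- key bound by induction
  have hbd : ∀ k, 1 ≤ k → k ≤ n - 1 →
      u (k + 1) - u k < h ^ 2 * ((k:ℝ) - 1/2) * g1 (u n) := by
    intro k hk1
    induction k, hk1 using Nat.le_induction with
    | base =>
      intro _
      rw [heq1]
      have := hg1lt 1 le_rfl (by omega)
      have hh2 : 0 < h ^ 2 := by positivity
      push_cast
      nlinarith
    | succ k hk ih =>
      intro hkle
      have hk' : k ≤ n - 1 := by omega
      have ihb := ih hk'
      have heq := heqk (k + 1) (by omega) hkle
      simp only [Nat.add_sub_cancel] at heq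
      have hglt := hg1lt (k + 1) (by omega) (by omega)
      have hh2 : 0 < h ^ 2 := by positivity
      push_cast
      nlinarith
  -- conclude
  have hfin := hbd (n - 1) (by omega) le_rfl
  have hsub : n - 1 + 1 = n := by omega
  rw [hsub] at hfin
  have hcast : ((n - 1 : ℕ) : ℝ) = (n:ℝ) - 1 := by
    push_cast [Nat.cast_sub (by omega : 1 ≤ n)]; ring
  rw [hcast] at hfin
  have key : h * α * g2 (u n) < h * g1 (u n) := by
    have : h ^ 2 * ((n:ℝ) - 1 - 1/2) * g1 (u n) + h ^ 2 / 2 * g1 (u n)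
        = h * g1 (u n) := by
      have : h ^ 2 * ((n:ℝ) - 1) = h := by
        nlinarith [hhn]
      nlinarith [this]
    linarith [heqn, hfin]
  have := (mul_lt_mul_iff_right₀ hh0).mp (by linarith [key] : h * (α * g2 (u n)) < h * g1 (u n))
  exact this
end

section
/- Let (α, u₁, …, u_n) ∈ (0, ∞)^{n+1} be a positive solution of the discrete system (S). If the function g := g₁/g₂ is surjective from (0, ∞) onto (0, ∞) and strictly decreasing on (0, ∞), then u_n < g⁻¹(α), where g⁻¹ : (0, ∞) → (0, ∞) denotes the inverse function of g. -/
open Finset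

theorem stmt13
    (g1 g2 : ℝ → ℝ)
    (hg1C : ContDiff ℝ 3 g1) (hg2C : ContDiff ℝ 3 g2)
    (hg1A : AnalyticAt ℝ g1 0) (hg2A : AnalyticAt ℝ g2 0)
    (hg10 : g1 0 = 0) (hg20 : g2 0 = 0)
    (hg1d1 : ∀ x > 0, 0 < deriv g1 x) (hg2d1 : ∀ x > 0, 0 < deriv g2 x)
    (hg1d2 : ∀ x > 0, 0 < iteratedDeriv 2 g1 x) (hg2d2 : ∀ x > 0, 0 < iteratedDeriv 2 g2 x)
    (hg1d3 : ∀ x > 0, 0 ≤ iteratedDeriv 3 g1 x) (hg2d3 : ∀ x > 0, 0 ≤ iteratedDeriv 3 g2 x)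
    (n : ℕ) (hn : 2 ≤ n) (h : ℝ) (hh : h = 1 / ((n : ℝ) - 1))
    (α : ℝ) (hα : 0 < α) (u : ℕ → ℝ)
    (hsol : IsSolution g1 g2 n h α u)
    (hsurj : ∀ y > (0 : ℝ), ∃ x > (0 : ℝ), g1 x / g2 x = y)
    (hdec : StrictAntiOn (fun x => g1 x / g2 x) (Set.Ioi 0))
    (ginv : ℝ → ℝ)
    (hginv1 : ∀ x > (0 : ℝ), ginv (g1 x / g2 x) = x)
    (hginv2 : ∀ y > (0 : ℝ), 0 < ginv y ∧ g1 (ginv y) / g2 (ginv y) = y)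
    :
    u n < ginv α := by
  obtain ⟨hpos, heq1, heq2, heq3⟩ := hsol
  have hn1 : (1 : ℝ) ≤ (n : ℝ) - 1 := by
    have : (2 : ℝ) ≤ (n : ℝ) := by exact_mod_cast hn
    linarith
  have hhpos : 0 < h := by rw [hh]; positivity
  have hprod : h * ((n : ℝ) - 1) = 1 := by
    rw [hh]; field_simp
  -- g1 strictly monotone on [0, ∞)
  have g1mono : StrictMonoOn g1 (Set.Ici 0) := by
    apply strictMonoOn_of_deriv_pos (convex_Ici 0) hg1C.continuous.continuousOn
    intro x hx
    rw [interior_Ici] at hx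
    exact hg1d1 x hx
  have g2mono : StrictMonoOn g2 (Set.Ici 0) := by
    apply strictMonoOn_of_deriv_pos (convex_Ici 0) hg2C.continuous.continuousOn
    intro x hx
    rw [interior_Ici] at hx
    exact hg2d1 x hx
  have g1pos : ∀ x > (0 : ℝ), 0 < g1 x := by
    intro x hx
    have := g1mono (Set.self_mem_Ici) (Set.mem_Ici.2 hx.le) hx
    rwa [hg10] at this
  have g2pos : ∀ x > (0 : ℝ), 0 < g2 x := by
    intro x hx
    have := g2mono (Set.self_mem_Ici) (Set.mem_Ici.2 hx.le) hx
    rwa [hg20] at this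
  -- key induction on differences
  have key : ∀ k, 1 ≤ k → k ≤ n - 1 →
      0 < u (k + 1) - u k ∧ u (k + 1) - u k ≤ h ^ 2 * ((k : ℝ) - 1/2) * g1 (u k) := by
    intro k
    induction k with
    | zero => intro h1; omega
    | succ m ih =>
      intro _ hm
      rcases Nat.eq_or_lt_of_le (Nat.one_le_iff_ne_zero.2 (Nat.succ_ne_zero m)) with h1 | h1
      · -- m + 1 = 1, i.e. m = 0
        have hm0 : m = 0 := by omega
        subst hm0
        have hu1 : 0 < u 1 := hpos 1 le_rfl (by omega)
        have hg : 0 < g1 (u 1) := g1pos _ hu1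
        constructor
        · rw [heq1]; positivity
        · rw [heq1]; push_cast; ring_nf; nlinarith [sq_nonneg h]
      · -- m ≥ 1
        have hm1 : 1 ≤ m := by omega
        have hmn : m ≤ n - 1 := by omega
        obtain ⟨ihp, ihb⟩ := ih hm1 hmn
        have heqm := heq2 (m + 1) (by omega) hm
        simp only [Nat.add_sub_cancel] at heqm
        have hum : 0 < u m := hpos m hm1 (by omega)
        have hum1 : 0 < u (m + 1) := hpos (m + 1) (by omega) (by omega)
        have hle : u m ≤ u (m + 1) := by linarith
        have hgle : g1 (u m) ≤ g1 (u (m + 1)) :=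
          g1mono.monotoneOn (Set.mem_Ici.2 hum.le) (Set.mem_Ici.2 hum1.le) hle
        have hg1m1 : 0 < g1 (u (m + 1)) := g1pos _ hum1
        have hd : u (m + 1 + 1) - u (m + 1) = (u (m + 1) - u m) + h ^ 2 * g1 (u (m + 1)) := by
          linarith
        constructor
        · rw [hd]; nlinarith [sq_nonneg h]
        · rw [hd]
          push_cast
          have hmr : (1 : ℝ) ≤ (m : ℝ) := by exact_mod_cast hm1
          have hc : (0:ℝ) ≤ h ^ 2 * ((m:ℝ) - 1/2) := by nlinarith [sq_nonneg h]
          have h3 := mul_le_mul_of_nonneg_left hgle hc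
          have h4 : h ^ 2 * ((m:ℝ) + 1 - 1/2) * g1 (u (m+1)) =
              h ^ 2 * ((m:ℝ) - 1/2) * g1 (u (m+1)) + h ^ 2 * g1 (u (m+1)) := by ring
          nlinarith
  -- apply at k = n - 1
  have hkey := key (n - 1) (by omega) le_rfl
  have hnn : n - 1 + 1 = n := by omega
  rw [hnn] at hkey
  obtain ⟨hdpos, hdle⟩ := hkey
  have hun : 0 < u n := hpos n (by omega) le_rfl
  have hun1 : 0 < u (n - 1) := hpos (n - 1) (by omega) (by omega)
  have hcast : ((n - 1 : ℕ) : ℝ) = (n : ℝ) - 1 := by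
    have : (1 : ℕ) ≤ n := by omega
    push_cast [Nat.cast_sub this]; ring
  rw [hcast] at hdle
  have hgn1lt : g1 (u (n - 1)) < g1 (u n) :=
    g1mono (Set.mem_Ici.2 hun1.le) (Set.mem_Ici.2 hun.le) (by linarith)
  have hg2n : 0 < g2 (u n) := g2pos _ hun
  have hg1n : 0 < g1 (u n) := g1pos _ hun
  -- conclude α * g2 (u n) < g1 (u n)
  have hmain : α * g2 (u n) < g1 (u n) := by
    have h1 : h * α * g2 (u n) < h ^ 2 * ((n : ℝ) - 1) * g1 (u n) := by
      rw [← heq3]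
      have hc2 : (0:ℝ) < h ^ 2 * ((n:ℝ) - 1 - 1/2) :=
        mul_pos (by positivity) (by linarith)
      have h5 := mul_lt_mul_of_pos_left hgn1lt hc2
      have h6 : h ^ 2 * ((n:ℝ) - 1) * g1 (u n) =
          h ^ 2 * ((n:ℝ) - 1 - 1/2) * g1 (u n) + h ^ 2 / 2 * g1 (u n) := by ring
      linarith
    have h2 : h ^ 2 * ((n : ℝ) - 1) = h := by
      rw [pow_two, mul_assoc, hprod, mul_one]
    rw [h2] at h1
    rw [mul_assoc] at h1
    exact lt_of_mul_lt_mul_left h1 hhpos.le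
  have hαlt : α < g1 (u n) / g2 (u n) := (lt_div_iff₀ hg2n).2 hmain
  -- final step
  obtain ⟨hgi0, hgieq⟩ := hginv2 α hα
  by_contra hle
  push_neg at hle
  rcases eq_or_lt_of_le hle with heq | hlt
  · rw [heq] at hgieq
    rw [hgieq] at hαlt
    exact lt_irrefl _ hαlt
  · have := hdec (Set.mem_Ioi.2 hgi0) (Set.mem_Ioi.2 hun) hlt
    simp only at this
    rw [hgieq] at this
    linarith
end

section
/- Let (α, u₁, …, u_n) ∈ (0, ∞)^{n+1} be a positive solution of the discrete system (S). If the function g := g₁/g₂ is surjective from (0, ∞) onto (0, ∞) and strictly decreasing on (0, ∞), then u_n < e^M · u₁, where M := g₁'(g⁻¹(α)) and g⁻¹ : (0, ∞) → (0, ∞) denotes the inverse function of g. -/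
open Finset

/-!
Telescoping the scheme gives `u (k+1) - u k = h² (g₁(u₁)/2 + ∑_{j=2}^k g₁(u_j))`, so `u` is
increasing, and inserting this into the boundary equation gives `α g₂(u_n) < g₁(u_n)`, i.e.
`g(u_n) > α = g(c)` with `c = g⁻¹(α)`; as `g` decreases, `u_n < c`. Strict convexity of `g₁` with
`g₁(0) = 0` then gives `g₁(x) < g₁'(c) x = M x` on `(0, c]`, which turns the same telescoped
identity into `u_{k+1} < (1 + hM) u_k`; hence `u_n < (1 + M/(n-1))^(n-1) u₁ ≤ e^M u₁`.
-/

theorem strictMonoOn_Ici_of_deriv_pos {f : ℝ → ℝ} (hf : Continuous f)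
    (hf' : ∀ x > 0, 0 < deriv f x) : StrictMonoOn f (Set.Ici 0) :=
  strictMonoOn_of_deriv_pos (convex_Ici 0) hf.continuousOn (by simpa using hf')

theorem pos_of_deriv_pos {f : ℝ → ℝ} (hf : Continuous f) (h0 : f 0 = 0)
    (hf' : ∀ x > 0, 0 < deriv f x) {x : ℝ} (hx : 0 < x) : 0 < f x :=
  h0 ▸ strictMonoOn_Ici_of_deriv_pos hf hf' Set.self_mem_Ici hx.le hx

theorem StrictConvexOn.lt_deriv_mul {f : ℝ → ℝ} (hfc : StrictConvexOn ℝ (Set.Ici 0) f)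
    (hf : Differentiable ℝ f) (h0 : f 0 = 0) {x c : ℝ} (hx : 0 < x) (hxc : x ≤ c) :
    f x < deriv f c * x := by
  have hslope : f x / x < deriv f x := by
    simpa [slope_def_field, h0] using
      hfc.slope_lt_deriv Set.self_mem_Ici hx.le hx (hf x)
  have hmono : deriv f x ≤ deriv f c :=
    (hfc.strictMonoOn_deriv fun y _ => hf y).monotoneOn hx.le (hx.le.trans hxc) hxc
  calc f x < deriv f x * x := (div_lt_iff₀ hx).1 hslope
    _ ≤ deriv f c * x := by gcongr

theorem Real.one_add_div_pow_le_exp {m : ℕ} {x : ℝ} (hx : -m ≤ x) :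
    (1 + x / m) ^ m ≤ Real.exp x := by
  simpa [sub_eq_add_neg, neg_div] using Real.one_sub_div_pow_le_exp_neg (t := -x) (by linarith)

theorem half_add_sum_Icc_lt {a : ℕ → ℝ} {B : ℝ} {k : ℕ} (hk : 1 ≤ k) (ha₁ : a 1 < B)
    (ha : ∀ j ∈ Icc 2 k, a j ≤ B) : a 1 / 2 + ∑ j ∈ Icc 2 k, a j < ((k : ℝ) - 1 / 2) * B := by
  have hsum : ∑ j ∈ Icc 2 k, a j ≤ ((k : ℝ) - 1) * B := by
    have := sum_le_card_nsmul _ _ _ ha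
    rwa [Nat.card_Icc, nsmul_eq_mul, show k + 1 - 2 = k - 1 by omega, Nat.cast_sub hk,
      Nat.cast_one] at this
  linarith

theorem lt_pow_mul_of_succ_lt_mul {u : ℕ → ℝ} {r : ℝ} (hr : 0 < r) {n : ℕ} (hn : 2 ≤ n)
    (hu : ∀ k, 1 ≤ k → k ≤ n - 1 → u (k + 1) < r * u k) : u n < r ^ (n - 1) * u 1 := by
  induction n, hn using Nat.le_induction with
  | base => simpa using hu 1 le_rfl le_rfl
  | succ n hn ih =>
    calc u (n + 1) < r * u n := hu n (by omega) (by omega)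
      _ < r * (r ^ (n - 1) * u 1) := by
        gcongr; exact ih fun k hk hkn => hu k hk (by omega)
      _ = r ^ (n + 1 - 1) * u 1 := by
        rw [show n + 1 - 1 = n - 1 + 1 by omega, pow_succ]; ring

namespace IsSolution

variable {g₁ g₂ : ℝ → ℝ} {n : ℕ} {h α : ℝ} {u : ℕ → ℝ}

theorem succ_sub_eq (hs : IsSolution g₁ g₂ n h α u) {k : ℕ} (hk : 1 ≤ k) (hkn : k ≤ n - 1) :
    u (k + 1) - u k = h ^ 2 * (g₁ (u 1) / 2 + ∑ j ∈ Icc 2 k, g₁ (u j)) := by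
  induction k, hk using Nat.le_induction with
  | base => simp [hs.2.1]; ring
  | succ k hk ih =>
    have hrec := hs.2.2.1 (k + 1) (by omega) hkn
    rw [sum_Icc_succ_top (by omega), Nat.add_sub_cancel] at *
    linarith [ih (by omega)]

theorem strictMonoOn (hs : IsSolution g₁ g₂ n h α u) (hh : h ≠ 0)
    (hg₁ : ∀ x > 0, 0 < g₁ x) : StrictMonoOn u (Set.Icc 1 n) := by
  refine strictMonoOn_of_lt_add_one Set.ordConnected_Icc fun k _ ⟨hk, _⟩ ⟨_, hkn⟩ => ?_
  have hsum : 0 < g₁ (u 1) / 2 + ∑ j ∈ Icc 2 k, g₁ (u j) :=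
    add_pos_of_pos_of_nonneg (half_pos (hg₁ _ (hs.1 1 le_rfl (by omega))))
      (sum_nonneg fun j hj => (hg₁ _ (hs.1 j (by grind) (by grind))).le)
  have := hs.succ_sub_eq hk (by omega : k ≤ n - 1)
  have : 0 < h ^ 2 := by positivity
  nlinarith

theorem lt_div_at_end (hs : IsSolution g₁ g₂ n h α u) (hn : 2 ≤ n) (hh : h * ((n : ℝ) - 1) = 1)
    (hh₀ : 0 < h) (hu : StrictMonoOn u (Set.Icc 1 n)) (hg₁ : StrictMonoOn g₁ (Set.Ioi 0))
    (hg₂ : 0 < g₂ (u n)) : α < g₁ (u n) / g₂ (u n) := by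
  have hpos : ∀ j ∈ Set.Icc 1 n, u j ∈ Set.Ioi 0 := fun j hj => hs.1 j hj.1 hj.2
  have hnmem : n ∈ Set.Icc 1 n := ⟨by omega, le_rfl⟩
  have hsum := half_add_sum_Icc_lt (a := fun j => g₁ (u j)) (B := g₁ (u n))
    (by omega : 1 ≤ n - 1)
    (hg₁ (hpos 1 ⟨le_rfl, by omega⟩) (hpos n hnmem) (hu ⟨le_rfl, by omega⟩ hnmem (by omega)))
    fun j hj => by
      simp only [mem_Icc] at hj
      have hj' : j ∈ Set.Icc 1 n := ⟨by omega, by omega⟩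
      exact hg₁.monotoneOn (hpos j hj') (hpos n hnmem) (hu.monotoneOn hj' hnmem (by omega))
  have hstep := hs.succ_sub_eq (by omega : 1 ≤ n - 1) le_rfl
  rw [Nat.sub_add_cancel (by omega : 1 ≤ n)] at hstep
  rw [Nat.cast_sub (by omega : 1 ≤ n), Nat.cast_one] at hsum
  have hlt : h * (α * g₂ (u n)) < h * g₁ (u n) :=
    calc h * (α * g₂ (u n)) = h ^ 2 * (g₁ (u 1) / 2 + ∑ j ∈ Icc 2 (n - 1), g₁ (u j)
          + g₁ (u n) / 2) := by linear_combination -hs.2.2.2 + hstep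
      _ < h ^ 2 * (((n : ℝ) - 1) * g₁ (u n)) := by gcongr; linarith
      _ = h * g₁ (u n) := by linear_combination h * g₁ (u n) * hh
  rw [lt_div_iff₀ hg₂]
  exact lt_of_mul_lt_mul_left hlt hh₀.le

theorem succ_lt_mul (hs : IsSolution g₁ g₂ n h α u) (hh : h * ((n : ℝ) - 1) = 1)
    (hu : StrictMonoOn u (Set.Icc 1 n)) {M : ℝ} (hM₀ : 0 ≤ M)
    (hM : ∀ j ∈ Set.Icc 1 n, g₁ (u j) < M * u j) {k : ℕ} (hk : 1 ≤ k) (hkn : k ≤ n - 1) :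
    u (k + 1) < (1 + h * M) * u k := by
  have hkmem : k ∈ Set.Icc 1 n := ⟨hk, by omega⟩
  have hle : ∀ j ∈ Set.Icc 1 k, M * u j ≤ M * u k := fun j ⟨hj, hjk⟩ =>
    mul_le_mul_of_nonneg_left (hu.monotoneOn ⟨hj, by omega⟩ hkmem hjk) hM₀
  have hsum := half_add_sum_Icc_lt (a := fun j => g₁ (u j)) (B := M * u k) hk
    ((hM 1 ⟨le_rfl, by omega⟩).trans_le (hle 1 ⟨le_rfl, hk⟩))
    fun j hj => (hM j ⟨by grind, by grind⟩).le.trans (hle j ⟨by grind, by grind⟩)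
  have hh₀ : h ≠ 0 := left_ne_zero_of_mul_eq_one hh
  have hMu : 0 ≤ M * u k := mul_nonneg hM₀ (hs.1 k hk (by omega)).le
  have hkn' : (k : ℝ) + 1 ≤ n := by exact_mod_cast (by omega : k + 1 ≤ n)
  calc u (k + 1) = u k + h ^ 2 * (g₁ (u 1) / 2 + ∑ j ∈ Icc 2 k, g₁ (u j)) := by
        linarith [hs.succ_sub_eq hk hkn]
    _ < u k + h ^ 2 * (((k : ℝ) - 1 / 2) * (M * u k)) := by gcongr
    _ ≤ u k + h ^ 2 * (((n : ℝ) - 1) * (M * u k)) := by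
        gcongr u k + h ^ 2 * (?_ * _); linarith
    _ = (1 + h * M) * u k := by linear_combination h * M * u k * hh

end IsSolution

theorem stmt14_general
    (g1 g2 : ℝ → ℝ)
    (hg1C : ContDiff ℝ 3 g1) (hg2C : ContDiff ℝ 3 g2)
    (hg10 : g1 0 = 0) (hg20 : g2 0 = 0)
    (hg1d1 : ∀ x > 0, 0 < deriv g1 x) (hg2d1 : ∀ x > 0, 0 < deriv g2 x)
    (hg1d2 : ∀ x > 0, 0 < iteratedDeriv 2 g1 x)
    (n : ℕ) (hn : 2 ≤ n) (h : ℝ) (hh : h = 1 / ((n : ℝ) - 1))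
    (α : ℝ) (hα : 0 < α) (u : ℕ → ℝ)
    (hsol : IsSolution g1 g2 n h α u)
    (hdec : StrictAntiOn (fun x => g1 x / g2 x) (Set.Ioi 0))
    (ginv : ℝ → ℝ)
    (hginv2 : ∀ y > (0 : ℝ), 0 < ginv y ∧ g1 (ginv y) / g2 (ginv y) = y)
    :
    u n < Real.exp (deriv g1 (ginv α)) * u 1 := by
  obtain ⟨hc, hgc⟩ := hginv2 α hα
  set M := deriv g1 (ginv α)
  have hn₀ : (0 : ℝ) < n - 1 := sub_pos.2 (by exact_mod_cast hn)
  have hh₀ : 0 < h := hh ▸ one_div_pos.2 hn₀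
  have hhn : h * ((n : ℝ) - 1) = 1 := by rw [hh, one_div_mul_cancel hn₀.ne']
  have hg₁ := strictMonoOn_Ici_of_deriv_pos hg1C.continuous hg1d1
  have hu := hsol.strictMonoOn hh₀.ne' fun _ => pos_of_deriv_pos hg1C.continuous hg10 hg1d1
  have hun : 0 < u n := hsol.1 n (by omega) le_rfl
  have hunc : u n < ginv α := by
    refine (hdec.lt_iff_gt hc hun).1 (hgc.symm ▸ ?_)
    exact hsol.lt_div_at_end hn hhn hh₀ hu (hg₁.mono Set.Ioi_subset_Ici_self)
      (pos_of_deriv_pos hg2C.continuous hg20 hg2d1 hun)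
  have hconv : StrictConvexOn ℝ (Set.Ici 0) g1 :=
    strictConvexOn_of_deriv2_pos (convex_Ici 0) hg1C.continuous.continuousOn
      (by simpa [iteratedDeriv_eq_iterate] using hg1d2)
  have hM : ∀ j ∈ Set.Icc 1 n, g1 (u j) < M * u j := fun j hj =>
    hconv.lt_deriv_mul (hg1C.differentiable (by norm_num)) hg10 (hsol.1 j hj.1 hj.2)
      ((hu.monotoneOn hj ⟨by omega, le_rfl⟩ hj.2).trans hunc.le)
  have hM₀ : 0 < M := hg1d1 _ hc
  calc u n < (1 + h * M) ^ (n - 1) * u 1 :=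
        lt_pow_mul_of_succ_lt_mul (by positivity) hn fun k hk hkn =>
          hsol.succ_lt_mul hhn hu hM₀.le hM hk hkn
    _ ≤ Real.exp M * u 1 := by
        gcongr
        · exact (hsol.1 1 le_rfl (by omega)).le
        · rw [hh, one_div_mul_eq_div, ← Nat.cast_pred (by omega)]
          exact Real.one_add_div_pow_le_exp (by linarith)

theorem stmt14
    (g1 g2 : ℝ → ℝ)
    (hg1C : ContDiff ℝ 3 g1) (hg2C : ContDiff ℝ 3 g2)
    (hg1A : AnalyticAt ℝ g1 0) (hg2A : AnalyticAt ℝ g2 0)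
    (hg10 : g1 0 = 0) (hg20 : g2 0 = 0)
    (hg1d1 : ∀ x > 0, 0 < deriv g1 x) (hg2d1 : ∀ x > 0, 0 < deriv g2 x)
    (hg1d2 : ∀ x > 0, 0 < iteratedDeriv 2 g1 x) (hg2d2 : ∀ x > 0, 0 < iteratedDeriv 2 g2 x)
    (hg1d3 : ∀ x > 0, 0 ≤ iteratedDeriv 3 g1 x) (hg2d3 : ∀ x > 0, 0 ≤ iteratedDeriv 3 g2 x)
    (n : ℕ) (hn : 2 ≤ n) (h : ℝ) (hh : h = 1 / ((n : ℝ) - 1))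
    (α : ℝ) (hα : 0 < α) (u : ℕ → ℝ)
    (hsol : IsSolution g1 g2 n h α u)
    (hsurj : ∀ y > (0 : ℝ), ∃ x > (0 : ℝ), g1 x / g2 x = y)
    (hdec : StrictAntiOn (fun x => g1 x / g2 x) (Set.Ioi 0))
    (ginv : ℝ → ℝ)
    (hginv1 : ∀ x > (0 : ℝ), ginv (g1 x / g2 x) = x)
    (hginv2 : ∀ y > (0 : ℝ), 0 < ginv y ∧ g1 (ginv y) / g2 (ginv y) = y)
    :
    u n < Real.exp (deriv g1 (ginv α)) * u 1 :=
  stmt14_general g1 g2 hg1C hg2C hg10 hg20 hg1d1 hg2d1 hg1d2 n hn h hh α hα u hsol hdec ginv hginv2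
end

section
/- Let (α, u) = (α, u₁, …, u_n) ∈ (0, ∞)^{n+1} be a positive solution of the discrete system (S). If the function g := g₁/g₂ is strictly decreasing on (0, ∞), then the Jacobian matrix J(α, u) is invertible with det(J(α, u)) < 0, and its (n−1)-th principal submatrix (the matrix formed by the first n − 1 rows and first n − 1 columns of J(α, u)) is symmetric and positive definite. -/
/-!
Shoot from `u 1 = s`: the recursion (S) determines `u 2, u 3, …` as functions of `s`, and
`v k = ∂u (k + 1)/∂s` obeys the three-term recursion whose coefficients are the diagonal entries
of `J`, so `v k` is the continuant of that diagonal, i.e. the `k`-th leading principal minor of `J`.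
For the discrete flux `A k = u (k + 1) - u k + h²/2 · g₁ (u (k + 1))` and `B k = ∂(A k)/∂s`, the
quantity `B k · g₂ (u (k + 1)) - A k · g₂' (u (k + 1)) · v k` is `g₂²` times the `s`-derivative of
`A k / g₂ (u (k + 1))`. Each step of the recursion keeps it negative, because `g₁ / g₂` decreases
(so `g₁' g₂ ≤ g₁ g₂'`) and `g₂` is strictly convex. The boundary equation `A (n - 1) = h α g₂ (u n)`
turns this quantity at `k = n - 1` into `det J · g₂ (u n)`.

The leading `(n - 1) × (n - 1)` block of `J` is tridiagonal with off-diagonal entries `-1` and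
diagonal entries `> 1` (the first) and `> 2` (the others), so its quadratic form is a positive
diagonal form plus a sum of squares of consecutive differences.
-/

open Finset

/-- The Jacobian matrix `J(α, u)` of the discrete system (S). -/
noncomputable def Jac (g1 g2 : ℝ → ℝ) (n : ℕ) (h α : ℝ) (u : ℕ → ℝ) :
    Matrix (Fin n) (Fin n) ℝ :=
  Matrix.of fun i j =>
    if i = j then
      (if (i : ℕ) = 0 then 1 + h ^ 2 / 2 * deriv g1 (u 1)
       else if (i : ℕ) = n - 1 then 1 + h ^ 2 / 2 * deriv g1 (u n) - h * α * deriv g2 (u n)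
       else 2 + h ^ 2 * deriv g1 (u ((i : ℕ) + 1)))
    else if (i : ℕ) + 1 = (j : ℕ) ∨ (j : ℕ) + 1 = (i : ℕ) then -1 else 0

open Set Filter Topology
open scoped Matrix

section Tridiag

variable {R : Type*}

def continuant [Ring R] (c : ℕ → R) : ℕ → R
  | 0 => 1
  | 1 => c 0
  | m + 2 => c (m + 1) * continuant c (m + 1) - continuant c m

def tridiagEntry [Ring R] (c : ℕ → R) (i j : ℕ) : R :=
  if i = j then c i else if i + 1 = j ∨ j + 1 = i then -1 else 0

def tridiag [Ring R] (c : ℕ → R) (m : ℕ) : Matrix (Fin m) (Fin m) R :=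
  Matrix.of fun i j => tridiagEntry c i j

@[simp]
lemma tridiag_apply [Ring R] (c : ℕ → R) (m : ℕ) (i j : Fin m) :
    tridiag c m i j = tridiagEntry c i j := rfl

lemma tridiagEntry_comm [Ring R] (c : ℕ → R) (i j : ℕ) :
    tridiagEntry c i j = tridiagEntry c j i := by
  unfold tridiagEntry
  split_ifs <;> first | rfl | omega | subst_vars; rfl

lemma tridiag_submatrix_castLE [Ring R] (c : ℕ → R) {k m : ℕ} (hkm : k ≤ m) :
    (tridiag c m).submatrix (Fin.castLE hkm) (Fin.castLE hkm) = tridiag c k := by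
  ext i j
  simp

lemma tridiagEntry_eq_zero [Ring R] (c : ℕ → R) {i j : ℕ} (hij : i + 1 < j ∨ j + 1 < i) :
    tridiagEntry c i j = 0 := by
  unfold tridiagEntry
  split_ifs <;> first | rfl | omega

-- Deleting the penultimate row and the last column leaves a matrix whose last row is `(0, …, 0, -1)`.
lemma det_tridiag_submatrix_succAbove [CommRing R] (c : ℕ → R) (m : ℕ) :
    ((tridiag c (m + 2)).submatrix (Fin.last m).castSucc.succAbove Fin.castSucc).det
      = -(tridiag c m).det := by
  set M := (tridiag c (m + 2)).submatrix (Fin.last m).castSucc.succAbove Fin.castSucc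
  have hrow : ∀ i : Fin m, M (Fin.last m) i.castSucc = 0 := fun i => by
    simp only [M, Matrix.submatrix_apply, Fin.succAbove_castSucc_self, Fin.succ_last,
      tridiag_apply, Fin.val_last, Fin.val_castSucc]
    exact tridiagEntry_eq_zero c (by omega)
  have hcorner : M (Fin.last m) (Fin.last m) = -1 := by
    simp [M, tridiagEntry]
  have hsub : M.submatrix (Fin.last m).succAbove (Fin.last m).succAbove = tridiag c m := by
    ext i j
    simp [M, Fin.succAbove_castSucc_of_lt _ _ (Fin.castSucc_lt_last i)]
  rw [Matrix.det_succ_row _ (Fin.last m), Fin.sum_univ_castSucc]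
  simp only [hrow, hcorner, hsub, mul_zero, zero_mul, sum_const_zero, zero_add, Fin.val_last,
    ← two_mul, pow_mul, neg_one_sq, one_pow, one_mul, neg_one_mul]

lemma det_tridiag [CommRing R] (c : ℕ → R) : ∀ m, (tridiag c m).det = continuant c m
  | 0 => by simp [continuant]
  | 1 => by simp [continuant, tridiagEntry]
  | m + 2 => by
    have hzero : ∀ i : Fin m, tridiag c (m + 2) i.castSucc.castSucc (Fin.last (m + 1)) = 0 :=
      fun i => tridiagEntry_eq_zero c (by simp)
    have hoff : tridiag c (m + 2) (Fin.last m).castSucc (Fin.last (m + 1)) = -1 := by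
      simp [tridiagEntry]
    have hdiag : tridiag c (m + 2) (Fin.last (m + 1)) (Fin.last (m + 1)) = c (m + 1) := by
      simp [tridiagEntry]
    rw [Matrix.det_succ_column _ (Fin.last (m + 1)), Fin.sum_univ_castSucc, Fin.sum_univ_castSucc]
    have hlast : (tridiag c (m + 2)).submatrix Fin.castSucc Fin.castSucc = tridiag c (m + 1) := by
      ext i j
      simp
    simp only [hzero, hoff, hdiag, Fin.succAbove_last, det_tridiag_submatrix_succAbove, hlast,
      det_tridiag c (m + 1), det_tridiag c m, Fin.val_castSucc, Fin.val_last, mul_zero, zero_mul,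
      sum_const_zero, zero_add]
    rw [Odd.neg_one_pow ⟨m, by ring⟩, Even.neg_one_pow ⟨m + 1, rfl⟩, continuant]
    ring

lemma tridiag_isSymm [Ring R] (c : ℕ → R) (m : ℕ) : (tridiag c m).IsSymm := by
  ext i j
  exact tridiagEntry_comm c j i

def tridiagForm (c y : ℕ → ℝ) (m : ℕ) : ℝ :=
  ∑ i ∈ range m, ∑ j ∈ range m, tridiagEntry c i j * y i * y j

lemma sum_tridiagEntry_last_mul {c : ℕ → ℝ} (y : ℕ → ℝ) {m : ℕ} (hm : 1 ≤ m) :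
    ∑ j ∈ range m, tridiagEntry c m j * y j = -y (m - 1) := by
  rw [sum_eq_single_of_mem (m - 1) (mem_range.mpr (by omega))]
  · simp [tridiagEntry, show m ≠ m - 1 by omega, show m - 1 + 1 = m by omega]
  · intro j hj hne
    rw [tridiagEntry_eq_zero c (by rw [Finset.mem_range] at hj; omega), zero_mul]

lemma tridiagForm_succ (c y : ℕ → ℝ) {m : ℕ} (hm : 1 ≤ m) :
    tridiagForm c y (m + 1) = tridiagForm c y m + c m * y m ^ 2 - 2 * y m * y (m - 1) := by
  have hcol : ∑ i ∈ range m, tridiagEntry c i m * y i * y m = -y (m - 1) * y m := by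
    simp_rw [tridiagEntry_comm c _ m, ← sum_mul, sum_tridiagEntry_last_mul y hm]
  have hrow : ∑ j ∈ range m, tridiagEntry c m j * y m * y j = -y (m - 1) * y m := by
    simp_rw [mul_right_comm _ (y m), ← sum_mul, sum_tridiagEntry_last_mul y hm]
  simp only [tridiagForm, sum_range_succ, sum_add_distrib, hcol, hrow]
  simp only [tridiagEntry, ite_mul, neg_mul, one_mul, zero_mul, ↓reduceIte]
  ring

lemma le_tridiagForm (c y : ℕ → ℝ) {m : ℕ} (hm : 1 ≤ m) :
    ∑ i ∈ range m, (c i - if i = 0 then 1 else 2) * y i ^ 2 + y (m - 1) ^ 2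
      ≤ tridiagForm c y m := by
  induction m, hm using Nat.le_induction with
  | base =>
    simp only [tridiagForm, tridiagEntry, range_one, sum_singleton, ↓reduceIte, tsub_self]
    exact le_of_eq (by ring)
  | succ m hm ih =>
    rw [tridiagForm_succ c y hm, sum_range_succ, if_neg (by omega), Nat.add_sub_cancel]
    nlinarith [sq_nonneg (y (m - 1) - y m)]

lemma dotProduct_tridiag_mulVec (c : ℕ → ℝ) {m : ℕ} (x : Fin m → ℝ) :
    x ⬝ᵥ tridiag c m *ᵥ x = tridiagForm c (fun j => if h : j < m then x ⟨j, h⟩ else 0) m := by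
  simp only [tridiagForm, dotProduct, Matrix.mulVec, mul_sum, ← Fin.sum_univ_eq_sum_range]
  refine sum_congr rfl fun i _ => sum_congr rfl fun j _ => ?_
  simp only [tridiag_apply, Fin.is_lt, ↓reduceDIte, Fin.eta]
  ring

lemma posDef_tridiag {c : ℕ → ℝ} {m : ℕ} (h0 : 1 < c 0) (hc : ∀ i, 0 < i → i < m → 2 < c i) :
    (tridiag c m).PosDef := by
  refine Matrix.PosDef.of_dotProduct_mulVec_pos (tridiag_isSymm c m) fun x hx => ?_
  obtain ⟨k, hk⟩ := Function.ne_iff.mp hx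
  have hm : 1 ≤ m := by have := k.isLt; omega
  set y : ℕ → ℝ := fun j => if h : j < m then x ⟨j, h⟩ else 0
  have hweight : ∀ i ∈ range m, 0 < c i - if i = 0 then 1 else 2 := by
    intro i hi
    split_ifs with h
    · subst h; linarith
    · linarith [hc i (by omega) (mem_range.mp hi)]
  have hsum : 0 < ∑ i ∈ range m, (c i - if i = 0 then 1 else 2) * y i ^ 2 := by
    refine sum_pos' (fun i hi => mul_nonneg (hweight i hi).le (sq_nonneg _))
      ⟨k, mem_range.mpr k.isLt, mul_pos (hweight k (mem_range.mpr k.isLt)) ?_⟩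
    simpa [y] using pow_two_pos_of_ne_zero hk
  rw [star_trivial, dotProduct_tridiag_mulVec]
  linarith [le_tridiagForm c y hm, sq_nonneg (y (m - 1))]

end Tridiag

lemma pos_of_deriv_pos_s16 {g : ℝ → ℝ} (hg : Continuous g) (hg0 : g 0 = 0)
    (hg' : ∀ x > 0, 0 < deriv g x) {x : ℝ} (hx : 0 < x) : 0 < g x := by
  have hmono : StrictMonoOn g (Ici 0) :=
    strictMonoOn_of_deriv_pos (convex_Ici 0) hg.continuousOn (by simpa using hg')
  simpa [hg0] using hmono self_mem_Ici hx.le hx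

lemma deriv_mul_le_mul_deriv_of_antitoneOn_div {f g : ℝ → ℝ} {s : Set ℝ} {x : ℝ}
    (hs : s ∈ 𝓝 x) (hf : DifferentiableAt ℝ f x) (hg : DifferentiableAt ℝ g x) (hgx : g x ≠ 0)
    (hanti : AntitoneOn (fun y => f y / g y) s) : deriv f x * g x ≤ f x * deriv g x := by
  have hacc : AccPt x (𝓟 s) := by
    rw [accPt_principal_iff_nhdsWithin, sdiff_eq, inter_comm,
      nhdsWithin_inter_of_mem' (mem_nhdsWithin_of_mem_nhds hs)]
    infer_instance
  have hquot := ((hf.hasDerivAt.div hg.hasDerivAt hgx).hasDerivWithinAt (s := s)).nonpos_of_antitoneOn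
    hacc hanti
  rw [div_le_iff₀ (by positivity), zero_mul] at hquot
  linarith

lemma flux_step {g1 g2 : ℝ → ℝ} {e s t v w A B : ℝ} (he : 0 < e) (hs : 0 < s) (ht : 0 < t)
    (hv : 0 < v) (hA : 0 ≤ A) (hB : 0 ≤ B)
    (hg1 : ∀ x > 0, 0 < g1 x) (hg1' : ∀ x > 0, 0 < deriv g1 x)
    (hcross : ∀ x > 0, deriv g1 x * g2 x ≤ g1 x * deriv g2 x)
    (hg2 : StrictConvexOn ℝ (Ioi 0) g2) (hg2d : Differentiable ℝ g2)
    (hts : t - s = A + e * g1 s) (hwv : w - v = B + e * deriv g1 s * v)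
    (hφ : B * g2 s - A * deriv g2 s * v ≤ 0) :
    0 ≤ t - s + e * g1 t ∧ 0 ≤ w - v + e * deriv g1 t * w ∧ 0 < w ∧
      (w - v + e * deriv g1 t * w) * g2 t - (t - s + e * g1 t) * deriv g2 t * w < 0 := by
  have hst : s < t := by nlinarith [hg1 s hs]
  have hwv_pos : 0 < w - v := by rw [hwv]; nlinarith [mul_pos (mul_pos he (hg1' s hs)) hv]
  have hw : 0 < w := by linarith
  have hmono : deriv g2 s ≤ deriv g2 t :=
    (hg2.strictMonoOn_deriv fun x _ => hg2d x).le_iff_le hs ht |>.mpr hst.le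
  have hslope : g2 t - g2 s < deriv g2 t * (t - s) := by
    have := hg2.slope_lt_deriv hs ht hst (hg2d t)
    rwa [slope_def_field, div_lt_iff₀ (by linarith)] at this
  refine ⟨by nlinarith [hg1 t ht], by nlinarith [mul_pos (mul_pos he (hg1' t ht)) hw], hw, ?_⟩
  calc (w - v + e * deriv g1 t * w) * g2 t - (t - s + e * g1 t) * deriv g2 t * w
      ≤ (w - v) * g2 t - (t - s) * deriv g2 t * w := by
        nlinarith [mul_le_mul_of_nonneg_left (hcross t ht) (mul_pos he hw).le]
    _ < (w - v) * (g2 s + deriv g2 t * (t - s)) - (t - s) * deriv g2 t * w := by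
        gcongr
        linarith
    _ = B * g2 s + e * deriv g1 s * v * g2 s - (t - s) * deriv g2 t * v := by
        linear_combination g2 s * hwv
    _ ≤ B * g2 s + e * v * g1 s * deriv g2 s - (t - s) * deriv g2 t * v := by
        nlinarith [mul_le_mul_of_nonneg_left (hcross s hs) (mul_pos he hv).le]
    _ ≤ B * g2 s + e * v * g1 s * deriv g2 t - (t - s) * deriv g2 t * v := by
        nlinarith [mul_le_mul_of_nonneg_left hmono (mul_pos (mul_pos he hv) (hg1 s hs)).le]
    _ = B * g2 s - A * deriv g2 t * v := by
        rw [hts]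
        ring
    _ ≤ B * g2 s - A * deriv g2 s * v := by
        nlinarith [mul_le_mul_of_nonneg_left hmono (mul_nonneg hA hv.le)]
    _ ≤ 0 := hφ

section Solution

variable (g1 g2 : ℝ → ℝ) (n : ℕ) (h α : ℝ) (u : ℕ → ℝ)

noncomputable def jacDiag (i : ℕ) : ℝ :=
  if i = 0 then 1 + h ^ 2 / 2 * deriv g1 (u 1)
  else if i = n - 1 then 1 + h ^ 2 / 2 * deriv g1 (u n) - h * α * deriv g2 (u n)
  else 2 + h ^ 2 * deriv g1 (u (i + 1))

lemma jac_eq_tridiag : Jac g1 g2 n h α u = tridiag (jacDiag g1 g2 n h α u) n := by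
  ext i j
  simp [Jac, jacDiag, tridiagEntry, Fin.ext_iff]

lemma jacDiag_of_pos_of_lt {i : ℕ} (hi : 0 < i) (hin : i + 1 < n) :
    jacDiag g1 g2 n h α u i = 2 + h ^ 2 * deriv g1 (u (i + 1)) := by
  simp [jacDiag, hi.ne', show i ≠ n - 1 by omega]

lemma jacDiag_last (m : ℕ) : jacDiag g1 g2 (m + 2) h α u (m + 1)
    = 1 + h ^ 2 / 2 * deriv g1 (u (m + 2)) - h * α * deriv g2 (u (m + 2)) := by
  simp [jacDiag]

noncomputable def flux (k : ℕ) : ℝ := u (k + 1) - u k + h ^ 2 / 2 * g1 (u (k + 1))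

noncomputable def fluxDeriv (k : ℕ) : ℝ :=
  let v := continuant (jacDiag g1 g2 n h α u)
  v k - v (k - 1) + h ^ 2 / 2 * deriv g1 (u (k + 1)) * v k

variable {g1 g2 n h α u}

lemma IsSolution.flux_invariant (hsol : IsSolution g1 g2 n h α u) (hh : h ≠ 0)
    (hg1 : ∀ x > 0, 0 < g1 x) (hg1' : ∀ x > 0, 0 < deriv g1 x)
    (hcross : ∀ x > 0, deriv g1 x * g2 x ≤ g1 x * deriv g2 x)
    (hg2 : StrictConvexOn ℝ (Ioi 0) g2) (hg2d : Differentiable ℝ g2) {k : ℕ} (hk : 1 ≤ k)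
    (hkn : k + 1 ≤ n) :
    let v := continuant (jacDiag g1 g2 n h α u)
    0 ≤ flux g1 h u k ∧ 0 ≤ fluxDeriv g1 g2 n h α u k ∧ 0 < v k ∧
      fluxDeriv g1 g2 n h α u k * g2 (u (k + 1)) - flux g1 h u k * deriv g2 (u (k + 1)) * v k
        < 0 := by
  have he : 0 < h ^ 2 / 2 := by positivity
  have hu : ∀ i, 1 ≤ i → i ≤ n → 0 < u i := hsol.1
  induction k, hk using Nat.le_induction with
  | base =>
    refine flux_step (A := 0) (B := 0) he (hu 1 le_rfl (by omega)) (hu 2 one_le_two hkn) one_pos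
      le_rfl le_rfl hg1 hg1' hcross hg2 hg2d ?_ ?_ (by simp)
    · linarith [hsol.2.1]
    · simp [continuant, jacDiag]
  | succ k hk ih =>
    obtain ⟨hA, hB, hv, hφ⟩ := ih (by omega)
    have hrec := hsol.2.2.1 (k + 1) (by omega) (by omega)
    simp only [Nat.add_sub_cancel] at hrec
    refine flux_step he (hu (k + 1) (by omega) (by omega)) (hu (k + 2) (by omega) hkn) hv hA hB
      hg1 hg1' hcross hg2 hg2d ?_ ?_ hφ.le
    · simp only [flux]
      linarith
    · obtain ⟨j, rfl⟩ : ∃ j, k = j + 1 := ⟨k - 1, by omega⟩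
      simp only [fluxDeriv, continuant, jacDiag_of_pos_of_lt g1 g2 n h α u (Nat.succ_pos j)
        (by omega), Nat.add_sub_cancel]
      ring

lemma IsSolution.det_jac_mul (hsol : IsSolution g1 g2 n h α u) (hn : 2 ≤ n) :
    (Jac g1 g2 n h α u).det * g2 (u n)
      = fluxDeriv g1 g2 n h α u (n - 1) * g2 (u n)
        - flux g1 h u (n - 1) * deriv g2 (u n) * continuant (jacDiag g1 g2 n h α u) (n - 1) := by
  obtain ⟨m, rfl⟩ : ∃ m, n = m + 2 := ⟨n - 2, by omega⟩
  have hlast : u (m + 2) - u (m + 1) + h ^ 2 / 2 * g1 (u (m + 2)) = h * α * g2 (u (m + 2)) :=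
    hsol.2.2.2
  rw [show m + 2 - 1 = m + 1 from rfl]
  simp only [jac_eq_tridiag, det_tridiag, continuant, fluxDeriv, flux, jacDiag_last g1 g2 h α u m,
    Nat.add_sub_cancel]
  linear_combination (deriv g2 (u (m + 2)) * continuant (jacDiag g1 g2 (m + 2) h α u) (m + 1))
    * hlast

lemma IsSolution.det_jac_neg (hsol : IsSolution g1 g2 n h α u) (hn : 2 ≤ n) (hh : h ≠ 0)
    (hg1 : ∀ x > 0, 0 < g1 x) (hg1' : ∀ x > 0, 0 < deriv g1 x) (hg2pos : ∀ x > 0, 0 < g2 x)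
    (hcross : ∀ x > 0, deriv g1 x * g2 x ≤ g1 x * deriv g2 x)
    (hg2 : StrictConvexOn ℝ (Ioi 0) g2) (hg2d : Differentiable ℝ g2) :
    (Jac g1 g2 n h α u).det < 0 := by
  obtain ⟨-, -, -, hneg⟩ := hsol.flux_invariant hh hg1 hg1' hcross hg2 hg2d
    (k := n - 1) (by omega) (by omega)
  rw [Nat.sub_add_cancel (by omega : 1 ≤ n), ← hsol.det_jac_mul hn] at hneg
  exact neg_of_mul_neg_left hneg (hg2pos _ (hsol.1 n (by omega) le_rfl)).le

lemma IsSolution.posDef_tridiag_jacDiag (hsol : IsSolution g1 g2 n h α u) (hn : 1 ≤ n)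
    (hh : h ≠ 0) (hg1' : ∀ x > 0, 0 < deriv g1 x) :
    (tridiag (jacDiag g1 g2 n h α u) (n - 1)).PosDef := by
  refine posDef_tridiag ?_ fun i hi hin => ?_
  · have := hg1' (u 1) (hsol.1 1 le_rfl hn)
    simp only [jacDiag, if_true]
    linarith [show 0 < h ^ 2 / 2 * deriv g1 (u 1) by positivity]
  · have := hg1' (u (i + 1)) (hsol.1 (i + 1) (by omega) (by omega))
    rw [jacDiag_of_pos_of_lt g1 g2 n h α u hi (by omega)]
    linarith [show 0 < h ^ 2 * deriv g1 (u (i + 1)) by positivity]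

end Solution

theorem stmt16_general
    (g1 g2 : ℝ → ℝ)
    (hg1C : ContDiff ℝ 3 g1) (hg2C : ContDiff ℝ 3 g2)
    (hg10 : g1 0 = 0) (hg20 : g2 0 = 0)
    (hg1d1 : ∀ x > 0, 0 < deriv g1 x) (hg2d1 : ∀ x > 0, 0 < deriv g2 x)
    (hg2d2 : ∀ x > 0, 0 < iteratedDeriv 2 g2 x)
    (n : ℕ) (hn : 2 ≤ n) (h : ℝ) (hh : h = 1 / ((n : ℝ) - 1))
    (α : ℝ) (u : ℕ → ℝ)
    (hsol : IsSolution g1 g2 n h α u)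
    (hdec : StrictAntiOn (fun x => g1 x / g2 x) (Set.Ioi 0)) :
    IsUnit (Jac g1 g2 n h α u) ∧ (Jac g1 g2 n h α u).det < 0 ∧
    ((Jac g1 g2 n h α u).submatrix (Fin.castLE (Nat.sub_le n 1))
        (Fin.castLE (Nat.sub_le n 1))).IsSymm ∧
    ((Jac g1 g2 n h α u).submatrix (Fin.castLE (Nat.sub_le n 1))
        (Fin.castLE (Nat.sub_le n 1))).PosDef := by
  have hh0 : h ≠ 0 := by
    have : (2 : ℝ) ≤ n := by exact_mod_cast hn
    exact hh ▸ one_div_ne_zero (by linarith)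
  have hg2d : Differentiable ℝ g2 := hg2C.differentiable (by norm_num)
  have hg2pos : ∀ x > 0, 0 < g2 x := fun x => pos_of_deriv_pos_s16 hg2C.continuous hg20 hg2d1
  have hcross : ∀ x > 0, deriv g1 x * g2 x ≤ g1 x * deriv g2 x := fun x hx =>
    deriv_mul_le_mul_deriv_of_antitoneOn_div (Ioi_mem_nhds hx)
      (hg1C.differentiable (by norm_num) x) (hg2d x) (hg2pos x hx).ne' hdec.antitoneOn
  have hconvex : StrictConvexOn ℝ (Ioi 0) g2 :=
    strictConvexOn_of_deriv2_pos' (convex_Ioi 0) hg2C.continuous.continuousOn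
      fun x hx => by simpa [iteratedDeriv_eq_iterate] using hg2d2 x hx
  have hdet := hsol.det_jac_neg hn hh0 (fun x => pos_of_deriv_pos_s16 hg1C.continuous hg10 hg1d1)
    hg1d1 hg2pos hcross hconvex hg2d
  have hsub : (Jac g1 g2 n h α u).submatrix (Fin.castLE (Nat.sub_le n 1))
      (Fin.castLE (Nat.sub_le n 1)) = tridiag (jacDiag g1 g2 n h α u) (n - 1) := by
    rw [jac_eq_tridiag, tridiag_submatrix_castLE]
  exact ⟨(Matrix.isUnit_iff_isUnit_det _).mpr hdet.ne.isUnit, hdet, hsub ▸ tridiag_isSymm _ _,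
    hsub ▸ hsol.posDef_tridiag_jacDiag (by omega) hh0 hg1d1⟩

theorem stmt16
    (g1 g2 : ℝ → ℝ)
    (hg1C : ContDiff ℝ 3 g1) (hg2C : ContDiff ℝ 3 g2)
    (hg1A : AnalyticAt ℝ g1 0) (hg2A : AnalyticAt ℝ g2 0)
    (hg10 : g1 0 = 0) (hg20 : g2 0 = 0)
    (hg1d1 : ∀ x > 0, 0 < deriv g1 x) (hg2d1 : ∀ x > 0, 0 < deriv g2 x)
    (hg1d2 : ∀ x > 0, 0 < iteratedDeriv 2 g1 x) (hg2d2 : ∀ x > 0, 0 < iteratedDeriv 2 g2 x)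
    (hg1d3 : ∀ x > 0, 0 ≤ iteratedDeriv 3 g1 x) (hg2d3 : ∀ x > 0, 0 ≤ iteratedDeriv 3 g2 x)
    (n : ℕ) (hn : 2 ≤ n) (h : ℝ) (hh : h = 1 / ((n : ℝ) - 1))
    (α : ℝ) (hα : 0 < α) (u : ℕ → ℝ)
    (hsol : IsSolution g1 g2 n h α u)
    (hdec : StrictAntiOn (fun x => g1 x / g2 x) (Set.Ioi 0)) :
    IsUnit (Jac g1 g2 n h α u) ∧ (Jac g1 g2 n h α u).det < 0 ∧
    ((Jac g1 g2 n h α u).submatrix (Fin.castLE (Nat.sub_le n 1))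
        (Fin.castLE (Nat.sub_le n 1))).IsSymm ∧
    ((Jac g1 g2 n h α u).submatrix (Fin.castLE (Nat.sub_le n 1))
        (Fin.castLE (Nat.sub_le n 1))).PosDef :=
  stmt16_general g1 g2 hg1C hg2C hg10 hg20 hg1d1 hg2d1 hg2d2 n hn h hh α u hsol hdec
end
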